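/- arXiv:2505.07218 — 7 statements merged into one kernel-verified Lean document; each statement's English description precedes it below -/
import Mathlib

section
/- Let Z be a matrix on A⊗B⊗C⊗A'⊗B'⊗C'. If Z satisfies the three one-to-two no-signalling conditions (A↛BC), (B↛AC) and (C↛AB), then Z also satisfies the three two-to-one no-signalling conditions (BC↛A), (AB↛C) and (AC↛B). In particular, the conditions {A↛BC, B↛AC, C↛AB} establish full no-signalling among the three parties. -/
open Matrix
open scoped ComplexOrder

variable {A B C A' B' C' : Type*}
variable [Fintype A] [Fintype B] [Fintype C] [Fintype A'] [Fintype B'] [Fintype C']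
variable [DecidableEq A] [DecidableEq B] [DecidableEq C]

/-- No-signalling condition (A ↛ BC):
`Tr_{A'} Z = (1_A/|A|) ⊗ Tr_{A A'} Z`, stated entrywise. -/
def NS_A_to_BC (Z : Matrix (A × B × C × A' × B' × C') (A × B × C × A' × B' × C') ℂ) : Prop :=
  ∀ (a a₁ : A) (b b₁ : B) (c c₁ : C) (b' b₁' : B') (c' c₁' : C'),
    (∑ x : A', Z (a, b, c, x, b', c') (a₁, b₁, c₁, x, b₁', c₁')) =
      (if a = a₁ then (Fintype.card A : ℂ)⁻¹ else 0) *
        ∑ y : A, ∑ x : A', Z (y, b, c, x, b', c') (y, b₁, c₁, x, b₁', c₁')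

/-- No-signalling condition (B ↛ AC):
`Tr_{B'} Z = (1_B/|B|) ⊗ Tr_{B B'} Z`, stated entrywise. -/
def NS_B_to_AC (Z : Matrix (A × B × C × A' × B' × C') (A × B × C × A' × B' × C') ℂ) : Prop :=
  ∀ (a a₁ : A) (b b₁ : B) (c c₁ : C) (a' a₁' : A') (c' c₁' : C'),
    (∑ y : B', Z (a, b, c, a', y, c') (a₁, b₁, c₁, a₁', y, c₁')) =
      (if b = b₁ then (Fintype.card B : ℂ)⁻¹ else 0) *
        ∑ β : B, ∑ y : B', Z (a, β, c, a', y, c') (a₁, β, c₁, a₁', y, c₁')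

/-- No-signalling condition (C ↛ AB):
`Tr_{C'} Z = (1_C/|C|) ⊗ Tr_{C C'} Z`, stated entrywise. -/
def NS_C_to_AB (Z : Matrix (A × B × C × A' × B' × C') (A × B × C × A' × B' × C') ℂ) : Prop :=
  ∀ (a a₁ : A) (b b₁ : B) (c c₁ : C) (a' a₁' : A') (b' b₁' : B'),
    (∑ z : C', Z (a, b, c, a', b', z) (a₁, b₁, c₁, a₁', b₁', z)) =
      (if c = c₁ then (Fintype.card C : ℂ)⁻¹ else 0) *
        ∑ γ : C, ∑ z : C', Z (a, b, γ, a', b', z) (a₁, b₁, γ, a₁', b₁', z)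

/-- No-signalling condition (BC ↛ A):
`Tr_{B'C'} Z = (1_{BC}/(|B||C|)) ⊗ Tr_{B C B' C'} Z`, stated entrywise. -/
def NS_BC_to_A (Z : Matrix (A × B × C × A' × B' × C') (A × B × C × A' × B' × C') ℂ) : Prop :=
  ∀ (a a₁ : A) (b b₁ : B) (c c₁ : C) (a' a₁' : A'),
    (∑ y : B', ∑ z : C', Z (a, b, c, a', y, z) (a₁, b₁, c₁, a₁', y, z)) =
      (if b = b₁ ∧ c = c₁ then ((Fintype.card B : ℂ) * (Fintype.card C : ℂ))⁻¹ else 0) *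
        ∑ β : B, ∑ γ : C, ∑ y : B', ∑ z : C',
          Z (a, β, γ, a', y, z) (a₁, β, γ, a₁', y, z)

/-- No-signalling condition (AB ↛ C):
`Tr_{A'B'} Z = (1_{AB}/(|A||B|)) ⊗ Tr_{A B A' B'} Z`, stated entrywise. -/
def NS_AB_to_C (Z : Matrix (A × B × C × A' × B' × C') (A × B × C × A' × B' × C') ℂ) : Prop :=
  ∀ (a a₁ : A) (b b₁ : B) (c c₁ : C) (c' c₁' : C'),
    (∑ x : A', ∑ y : B', Z (a, b, c, x, y, c') (a₁, b₁, c₁, x, y, c₁')) =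
      (if a = a₁ ∧ b = b₁ then ((Fintype.card A : ℂ) * (Fintype.card B : ℂ))⁻¹ else 0) *
        ∑ α : A, ∑ β : B, ∑ x : A', ∑ y : B',
          Z (α, β, c, x, y, c') (α, β, c₁, x, y, c₁')

/-- No-signalling condition (AC ↛ B):
`Tr_{A'C'} Z = (1_{AC}/(|A||C|)) ⊗ Tr_{A C A' C'} Z`, stated entrywise. -/
def NS_AC_to_B (Z : Matrix (A × B × C × A' × B' × C') (A × B × C × A' × B' × C') ℂ) : Prop :=
  ∀ (a a₁ : A) (b b₁ : B) (c c₁ : C) (b' b₁' : B'),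
    (∑ x : A', ∑ z : C', Z (a, b, c, x, b', z) (a₁, b₁, c₁, x, b₁', z)) =
      (if a = a₁ ∧ c = c₁ then ((Fintype.card A : ℂ) * (Fintype.card C : ℂ))⁻¹ else 0) *
        ∑ α : A, ∑ γ : C, ∑ x : A', ∑ z : C',
          Z (α, b, γ, x, b', z) (α, b₁, γ, x, b₁', z)

/-!
Trace out the outputs one at a time: in `Tr_{B'C'} Z = Tr_{B'} (Tr_{C'} Z)` the condition
`C ↛ AB` splits off `1_C/|C|`, leaving `Tr_{B'} (Tr_{C C'} Z)`, and `B ↛ AC` (traced over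
`C C'`) splits off `1_B/|B|`. So `BC ↛ A` follows from `B ↛ AC` and `C ↛ AB`, and likewise
for the other two pairs of parties.
-/

open Finset in
/-- `f x y u v x₁ y₁` stands for the entry `(x, y, u, v), (x₁, y₁, u, v)` of a bipartite Choi
matrix, with the outputs `u, v` already diagonal since they are only ever traced out. -/
theorem sum_sum_eq_ite_mul_of_no_signalling {𝕜 X Y X' Y' : Type*} [Semifield 𝕜]
    [Fintype X] [Fintype Y] [Fintype X'] [Fintype Y'] [DecidableEq X] [DecidableEq Y]
    (f : X → Y → X' → Y' → X → Y → 𝕜)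
    (hX : ∀ x x₁ y y₁ v, ∑ u, f x y u v x₁ y₁ =
      (if x = x₁ then (Fintype.card X : 𝕜)⁻¹ else 0) * ∑ ξ, ∑ u, f ξ y u v ξ y₁)
    (hY : ∀ x x₁ y y₁ u, ∑ v, f x y u v x₁ y₁ =
      (if y = y₁ then (Fintype.card Y : 𝕜)⁻¹ else 0) * ∑ η, ∑ v, f x η u v x₁ η)
    (x x₁ : X) (y y₁ : Y) :
    ∑ u, ∑ v, f x y u v x₁ y₁ =
      (if x = x₁ ∧ y = y₁ then ((Fintype.card X : 𝕜) * Fintype.card Y)⁻¹ else 0) *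
        ∑ ξ, ∑ η, ∑ u, ∑ v, f ξ η u v ξ η := by
  calc ∑ u, ∑ v, f x y u v x₁ y₁
      = (if y = y₁ then (Fintype.card Y : 𝕜)⁻¹ else 0) * ∑ η, ∑ v, ∑ u, f x η u v x₁ η := by
        rw [sum_congr rfl fun u _ => hY x x₁ y y₁ u, ← mul_sum, ← sum_comm_cycle]
    _ = (if y = y₁ then (Fintype.card Y : 𝕜)⁻¹ else 0) *
          ∑ η, ∑ v, (if x = x₁ then (Fintype.card X : 𝕜)⁻¹ else 0) * ∑ ξ, ∑ u, f ξ η u v ξ η := by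
        simp_rw [fun η v => hX x x₁ η η v]
    _ = _ := by
        simp only [← mul_sum, ← mul_assoc, ite_zero_mul_ite_zero, mul_inv, and_comm (a := y = y₁)]
        rw [mul_comm (Fintype.card Y : 𝕜)⁻¹,
          sum_comm (s := (univ : Finset X)) (t := (univ : Finset Y))]
        exact congrArg _ (sum_congr rfl fun η _ => sum_comm_cycle.symm)

/-- The three one-to-two no-signalling conditions imply the three two-to-one
no-signalling conditions; in particular they establish full no-signalling among
the three parties. -/
theorem one_to_two_NS_implies_two_to_one_NS
    (Z : Matrix (A × B × C × A' × B' × C') (A × B × C × A' × B' × C') ℂ)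
    (hA : NS_A_to_BC Z) (hB : NS_B_to_AC Z) (hC : NS_C_to_AB Z) :
    NS_BC_to_A Z ∧ NS_AB_to_C Z ∧ NS_AC_to_B Z := by
  refine ⟨fun a a₁ b b₁ c c₁ a' a₁' => ?_, fun a a₁ b b₁ c c₁ c' c₁' => ?_,
    fun a a₁ b b₁ c c₁ b' b₁' => ?_⟩
  · exact sum_sum_eq_ite_mul_of_no_signalling
      (fun b c y z b₁ c₁ => Z (a, b, c, a', y, z) (a₁, b₁, c₁, a₁', y, z))
      (fun b b₁ c c₁ z => hB a a₁ b b₁ c c₁ a' a₁' z z)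
      (fun b b₁ c c₁ y => hC a a₁ b b₁ c c₁ a' a₁' y y) b b₁ c c₁
  · exact sum_sum_eq_ite_mul_of_no_signalling
      (fun a b x y a₁ b₁ => Z (a, b, c, x, y, c') (a₁, b₁, c₁, x, y, c₁'))
      (fun a a₁ b b₁ y => hA a a₁ b b₁ c c₁ y y c' c₁')
      (fun a a₁ b b₁ x => hB a a₁ b b₁ c c₁ x x c' c₁') a a₁ b b₁
  · exact sum_sum_eq_ite_mul_of_no_signalling
      (fun a c x z a₁ c₁ => Z (a, b, c, x, b', z) (a₁, b₁, c₁, x, b₁', z))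
      (fun a a₁ c c₁ z => hA a a₁ b b₁ c c₁ b' b₁' z z)
      (fun a a₁ c c₁ x => hC a a₁ b b₁ c c₁ x x b' b₁') a a₁ c c₁
end

section
/- Suppose Z̄ is in twirled form with components E1, E2, E3, E4. Then Z̄ satisfies the no-signalling (causality) condition (BC↛A), namely Tr_{B'C'} Z̄ = (1_{BC}/(|B||C|)) ⊗ Tr_{B C B' C'} Z̄, if and only if E1 + (r2²−1)·E2 + (r1²−1)·E3 + (r1²−1)(r2²−1)·E4 = ρ ⊗ 1_{BC}, where ρ is the matrix on A' defined by ρ = (1/(|B||C|))·Tr_{BC}[E1 + (r2²−1)·E2 + (r1²−1)·E3 + (r1²−1)(r2²−1)·E4]. -/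
open Matrix
open scoped ComplexOrder

/-- Entry of the maximally entangled projector `φ` on `Fin r × Fin r`:
`φ ((i,j),(k,l)) = δ_{ij} δ_{kl} / r`. -/
noncomputable def phiE (r : ℕ) (i j k l : Fin r) : ℂ :=
  if i = j ∧ k = l then (r : ℂ)⁻¹ else 0

/-- Entry of the complementary projector `1 − φ` on `Fin r × Fin r`. -/
noncomputable def phiQ (r : ℕ) (i j k l : Fin r) : ℂ :=
  (if i = k ∧ j = l then 1 else 0) - phiE r i j k l

variable {A' B C : Type*} [Fintype A'] [Fintype B] [Fintype C]
  [DecidableEq A'] [DecidableEq B] [DecidableEq C]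

/-- The twirled Choi matrix
`Z̄ = r1·r2·(Π1⊗E1 + Π2⊗E2 + Π3⊗E3 + Π4⊗E4)` on
`A1⊗A2⊗B⊗C⊗A'⊗B'⊗C'` with `A1 = B' = Fin r1` and `A2 = C' = Fin r2`,
where `Π1 = φ1⊗φ2`, `Π2 = φ1⊗(1−φ2)`, `Π3 = (1−φ1)⊗φ2`,
`Π4 = (1−φ1)⊗(1−φ2)` act on the slots `(A1,B')` and `(A2,C')`. -/
noncomputable def twirled (r1 r2 : ℕ)
    (E1 E2 E3 E4 : Matrix (A' × B × C) (A' × B × C) ℂ) :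
    Matrix (Fin r1 × Fin r2 × B × C × A' × Fin r1 × Fin r2)
      (Fin r1 × Fin r2 × B × C × A' × Fin r1 × Fin r2) ℂ :=
  Matrix.of fun p q =>
    match p, q with
    | (a1, a2, b, c, a', b', c'), (d1, d2, e, f, d', e', f') =>
      (r1 : ℂ) * (r2 : ℂ) *
        (phiE r1 a1 b' d1 e' * phiE r2 a2 c' d2 f' * E1 (a', b, c) (d', e, f) +
         phiE r1 a1 b' d1 e' * phiQ r2 a2 c' d2 f' * E2 (a', b, c) (d', e, f) +
         phiQ r1 a1 b' d1 e' * phiE r2 a2 c' d2 f' * E3 (a', b, c) (d', e, f) +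
         phiQ r1 a1 b' d1 e' * phiQ r2 a2 c' d2 f' * E4 (a', b, c) (d', e, f))

lemma sum_phiE_diag {r : ℕ} (a d : Fin r) :
    ∑ y : Fin r, phiE r a y d y = if a = d then (r : ℂ)⁻¹ else 0 := by
  simp only [phiE]
  by_cases h : a = d
  · subst h; simp
  · simp only [h, if_false]
    apply Finset.sum_eq_zero
    intro y _
    rw [if_neg]
    rintro ⟨h1, h2⟩
    exact h (h1.trans h2.symm)

lemma sum_phiQ_diag {r : ℕ} (a d : Fin r) :
    ∑ y : Fin r, phiQ r a y d y = if a = d then (r : ℂ) - (r : ℂ)⁻¹ else 0 := by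
  simp only [phiQ, Finset.sum_sub_distrib, sum_phiE_diag]
  by_cases h : a = d <;> simp [h]

set_option linter.unusedSectionVars false in
lemma twirled_ptrace {r1 r2 : ℕ} (hr1 : 1 ≤ r1) (hr2 : 1 ≤ r2)
    (E1 E2 E3 E4 : Matrix (A' × B × C) (A' × B × C) ℂ)
    (a1 d1 : Fin r1) (a2 d2 : Fin r2) (b e : B) (c f : C) (x w : A') :
    (∑ y : Fin r1, ∑ z : Fin r2,
        twirled r1 r2 E1 E2 E3 E4 (a1, a2, b, c, x, y, z) (d1, d2, e, f, w, y, z)) =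
      (if a1 = d1 ∧ a2 = d2 then 1 else 0) *
        (E1 (x, b, c) (w, e, f) + ((r2 : ℂ) ^ 2 - 1) * E2 (x, b, c) (w, e, f) +
          ((r1 : ℂ) ^ 2 - 1) * E3 (x, b, c) (w, e, f) +
          ((r1 : ℂ) ^ 2 - 1) * ((r2 : ℂ) ^ 2 - 1) * E4 (x, b, c) (w, e, f)) := by
  have h1 : (r1 : ℂ) ≠ 0 := Nat.cast_ne_zero.mpr (by omega)
  have h2 : (r2 : ℂ) ≠ 0 := Nat.cast_ne_zero.mpr (by omega)
  unfold twirled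
  simp only [of_apply]
  simp only [mul_assoc, ← Finset.mul_sum, Finset.sum_add_distrib, ← Finset.sum_mul,
    sum_phiE_diag, sum_phiQ_diag]
  by_cases ha : a1 = d1 <;> by_cases hb : a2 = d2 <;>
    simp only [ha, hb, if_true, if_false, true_and, and_true, and_false, false_and] <;>
    [skip; simp; simp; simp]
  field_simp

/-- For `Z̄` in twirled form, the causality condition (BC ↛ A),
`Tr_{B'C'} Z̄ = (1_{BC}/(|B||C|)) ⊗ Tr_{B C B' C'} Z̄`, holds iff
`E1 + (r2²−1)·E2 + (r1²−1)·E3 + (r1²−1)(r2²−1)·E4 = ρ ⊗ 1_{BC}`, where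
`ρ = (1/(|B||C|))·Tr_{BC}[E1 + (r2²−1)·E2 + (r1²−1)·E3 + (r1²−1)(r2²−1)·E4]`
(all stated entrywise). -/
theorem twirled_NS_BC_to_A_iff {r1 r2 : ℕ} (hr1 : 1 ≤ r1) (hr2 : 1 ≤ r2)
    (E1 E2 E3 E4 : Matrix (A' × B × C) (A' × B × C) ℂ)
    (hE1 : E1.IsHermitian) (hE2 : E2.IsHermitian)
    (hE3 : E3.IsHermitian) (hE4 : E4.IsHermitian)
    (Zbar : Matrix (Fin r1 × Fin r2 × B × C × A' × Fin r1 × Fin r2)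
      (Fin r1 × Fin r2 × B × C × A' × Fin r1 × Fin r2) ℂ)
    (hZ : Zbar = twirled r1 r2 E1 E2 E3 E4) :
    (∀ (a1 d1 : Fin r1) (a2 d2 : Fin r2) (b e : B) (c f : C) (x w : A'),
        (∑ y : Fin r1, ∑ z : Fin r2,
            Zbar (a1, a2, b, c, x, y, z) (d1, d2, e, f, w, y, z)) =
          (if b = e ∧ c = f then
              ((Fintype.card B : ℂ) * (Fintype.card C : ℂ))⁻¹ else 0) *
            ∑ β : B, ∑ γ : C, ∑ y : Fin r1, ∑ z : Fin r2,
              Zbar (a1, a2, β, γ, x, y, z) (d1, d2, β, γ, w, y, z))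
      ↔
    (∀ (x w : A') (b e : B) (c f : C),
        E1 (x, b, c) (w, e, f) + ((r2 : ℂ) ^ 2 - 1) * E2 (x, b, c) (w, e, f) +
          ((r1 : ℂ) ^ 2 - 1) * E3 (x, b, c) (w, e, f) +
          ((r1 : ℂ) ^ 2 - 1) * ((r2 : ℂ) ^ 2 - 1) * E4 (x, b, c) (w, e, f) =
        (if b = e ∧ c = f then 1 else 0) *
          (((Fintype.card B : ℂ) * (Fintype.card C : ℂ))⁻¹ *
            ∑ β : B, ∑ γ : C,
              (E1 (x, β, γ) (w, β, γ) + ((r2 : ℂ) ^ 2 - 1) * E2 (x, β, γ) (w, β, γ) +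
                ((r1 : ℂ) ^ 2 - 1) * E3 (x, β, γ) (w, β, γ) +
                ((r1 : ℂ) ^ 2 - 1) * ((r2 : ℂ) ^ 2 - 1) * E4 (x, β, γ) (w, β, γ)))) := by
  subst hZ
  constructor
  · intro h x w b e c f
    have h0 := h ⟨0, hr1⟩ ⟨0, hr1⟩ ⟨0, hr2⟩ ⟨0, hr2⟩ b e c f x w
    simp only [twirled_ptrace hr1 hr2, and_self, eq_self_iff_true, if_true, true_and,
      one_mul] at h0
    rw [h0]
    by_cases hbc : b = e ∧ c = f
    · obtain ⟨hb', hc'⟩ := hbc; subst hb'; subst hc'; simp [mul_assoc]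
    · simp [hbc]
  · intro h a1 d1 a2 d2 b e c f x w
    simp only [twirled_ptrace hr1 hr2, ← Finset.mul_sum]
    by_cases hd : a1 = d1 ∧ a2 = d2
    · rw [if_pos hd]
      simp only [one_mul]
      rw [h x w b e c f]
      by_cases hbc : b = e ∧ c = f
      · obtain ⟨hb', hc'⟩ := hbc; subst hb'; subst hc'; simp [mul_assoc]
      · simp [hbc]
    · rw [if_neg hd]
      simp
end

section
/- If (E1, E2, E3, ρ) is NS∩PPT-feasible of size (r1, r2) for N, then the matrix Λ := E1 satisfies: 0 ≤ Λ ≤ ρ⊗1_{BC}; Tr_{A'} Λ = 1_{BC}/(r1² r2²); |Λ^{T_{BC}}| ≤ (1/(r1 r2))·ρ⊗1_{BC}; |Λ^{T_B}| ≤ ρ⊗1_{BC}; and |Λ^{T_C}| ≤ ρ⊗1_{BC}. (Hence the maximal channel fidelity of PPT-preserving and no-signalling codes of size (r1, r2) is upper bounded by the semidefinite program maximizing Tr[Λ·N^T] under these relaxed constraints.) -/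
open Matrix
open scoped ComplexOrder

variable {A' B C : Type*} [Fintype A'] [Fintype B] [Fintype C]
  [DecidableEq A'] [DecidableEq B] [DecidableEq C]

/-- `ρ ⊗ 1_{BC}` for a matrix `ρ` on `A'`. -/
noncomputable def rhoTens (ρ : Matrix A' A' ℂ) :
    Matrix (A' × B × C) (A' × B × C) ℂ :=
  Matrix.of fun p q => ρ p.1 q.1 * (if p.2 = q.2 then 1 else 0)

/-- Partial transpose over `B`. -/
def ptB (E : Matrix (A' × B × C) (A' × B × C) ℂ) :
    Matrix (A' × B × C) (A' × B × C) ℂ :=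
  Matrix.of fun p q => E (p.1, q.2.1, p.2.2) (q.1, p.2.1, q.2.2)

/-- Partial transpose over `C`. -/
def ptC (E : Matrix (A' × B × C) (A' × B × C) ℂ) :
    Matrix (A' × B × C) (A' × B × C) ℂ :=
  Matrix.of fun p q => E (p.1, p.2.1, q.2.2) (q.1, q.2.1, p.2.2)

/-- Partial transpose over `B` and `C` jointly. -/
def ptBC (E : Matrix (A' × B × C) (A' × B × C) ℂ) :
    Matrix (A' × B × C) (A' × B × C) ℂ :=
  Matrix.of fun p q => E (p.1, q.2) (q.1, p.2)

/-- Partial trace over `A'`. -/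
noncomputable def trA' (E : Matrix (A' × B × C) (A' × B × C) ℂ) :
    Matrix (B × C) (B × C) ℂ :=
  Matrix.of fun w v => ∑ x : A', E (x, w) (x, v)

/-- Marginal `E^{A'C} = Tr_B E`. -/
noncomputable def margAC (E : Matrix (A' × B × C) (A' × B × C) ℂ) :
    Matrix (A' × C) (A' × C) ℂ :=
  Matrix.of fun p q => ∑ b : B, E (p.1, b, p.2) (q.1, b, q.2)

/-- Marginal `E^{A'B} = Tr_C E`. -/
noncomputable def margAB (E : Matrix (A' × B × C) (A' × B × C) ℂ) :
    Matrix (A' × B) (A' × B) ℂ :=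
  Matrix.of fun p q => ∑ c : C, E (p.1, p.2, c) (q.1, q.2, c)

/-- `(1_B/|B|) ⊗ X` for a matrix `X` on `A'⊗C`, placed on the appropriate
slots of `A'⊗B⊗C`. -/
noncomputable def tensB (X : Matrix (A' × C) (A' × C) ℂ) :
    Matrix (A' × B × C) (A' × B × C) ℂ :=
  Matrix.of fun p q =>
    (if p.2.1 = q.2.1 then (Fintype.card B : ℂ)⁻¹ else 0) *
      X (p.1, p.2.2) (q.1, q.2.2)

/-- `(1_C/|C|) ⊗ X` for a matrix `X` on `A'⊗B`, placed on the appropriate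
slots of `A'⊗B⊗C`. -/
noncomputable def tensC (X : Matrix (A' × B) (A' × B) ℂ) :
    Matrix (A' × B × C) (A' × B × C) ℂ :=
  Matrix.of fun p q =>
    (if p.2.2 = q.2.2 then (Fintype.card C : ℂ)⁻¹ else 0) *
      X (p.1, p.2.1) (q.1, q.2.1)

/-- The tuple `(E1, E2, E3, ρ)` is NS∩PPT-feasible of size `(r1, r2)`:
the constraints of the exact SDP for PPT-preserving and no-signalling
forward-assisted codes (with `E4` eliminated). -/
noncomputable def NSPPTFeasible (r1 r2 : ℕ)
    (E1 E2 E3 : Matrix (A' × B × C) (A' × B × C) ℂ)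
    (ρ : Matrix A' A' ℂ) : Prop :=
  -- (i) positivity and normalization
  E1.PosSemidef ∧ E2.PosSemidef ∧ E3.PosSemidef ∧ ρ.PosSemidef ∧ ρ.trace = 1 ∧
  -- (ii) causality (BC ↛ A) constraint
  (rhoTens ρ -
    (E1 + ((r2 : ℂ) ^ 2 - 1) • E2 + ((r1 : ℂ) ^ 2 - 1) • E3)).PosSemidef ∧
  -- (iii) NS (A ↛ BC)
  trA' E1 = ((r1 : ℂ) ^ 2 * (r2 : ℂ) ^ 2)⁻¹ • (1 : Matrix (B × C) (B × C) ℂ) ∧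
  trA' E2 = ((r1 : ℂ) ^ 2 * (r2 : ℂ) ^ 2)⁻¹ • (1 : Matrix (B × C) (B × C) ℂ) ∧
  trA' E3 = ((r1 : ℂ) ^ 2 * (r2 : ℂ) ^ 2)⁻¹ • (1 : Matrix (B × C) (B × C) ℂ) ∧
  -- (iv) NS (B ↛ AC) and NS (C ↛ AB)
  E1 + ((r1 : ℂ) ^ 2 - 1) • E3 =
    tensB (margAC E1 + ((r1 : ℂ) ^ 2 - 1) • margAC E3) ∧
  E1 + ((r2 : ℂ) ^ 2 - 1) • E2 =
    tensC (margAB E1 + ((r2 : ℂ) ^ 2 - 1) • margAB E2) ∧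
  -- (v) PPT_A
  ((((r2 : ℂ) ^ 2 - 1) / (r2 : ℂ)) • ptBC E2 +
      (((r1 : ℂ) ^ 2 - 1) / (r1 : ℂ)) • ptBC E3 +
      ((r1 : ℂ) * (r2 : ℂ))⁻¹ • rhoTens ρ +
      (1 + (r2 : ℂ)⁻¹ + (r1 : ℂ)⁻¹) • ptBC E1).PosSemidef ∧
  (((r1 : ℂ) * (r2 : ℂ))⁻¹ • rhoTens ρ +
      (1 - (r2 : ℂ)⁻¹ - (r1 : ℂ)⁻¹) • ptBC E1 -
      ((((r2 : ℂ) ^ 2 - 1) / (r2 : ℂ)) • ptBC E2 +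
        (((r1 : ℂ) ^ 2 - 1) / (r1 : ℂ)) • ptBC E3)).PosSemidef ∧
  ((((r2 : ℂ) ^ 2 - 1) / (r2 : ℂ)) • ptBC E2 -
      (((r1 : ℂ) ^ 2 - 1) / (r1 : ℂ)) • ptBC E3 +
      ((r1 : ℂ) * (r2 : ℂ))⁻¹ • rhoTens ρ -
      (1 - (r2 : ℂ)⁻¹ + (r1 : ℂ)⁻¹) • ptBC E1).PosSemidef ∧
  (((r1 : ℂ) * (r2 : ℂ))⁻¹ • rhoTens ρ -
      (1 + (r2 : ℂ)⁻¹ - (r1 : ℂ)⁻¹) • ptBC E1 -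
      ((((r2 : ℂ) ^ 2 - 1) / (r2 : ℂ)) • ptBC E2 -
        (((r1 : ℂ) ^ 2 - 1) / (r1 : ℂ)) • ptBC E3)).PosSemidef ∧
  -- (vi) PPT_B
  (ptB E1 + ((r1 : ℂ) - 1) • ptB E3).PosSemidef ∧
  (((r1 : ℂ) + 1) • ptB E3 - ptB E1).PosSemidef ∧
  (rhoTens ρ - ((r1 : ℂ) ^ 2 - 1) • ptB E3 - ptB E1 -
      ((r1 : ℂ) * ((r2 : ℂ) ^ 2 - 1)) • ptB E2).PosSemidef ∧
  (rhoTens ρ - ((r1 : ℂ) ^ 2 - 1) • ptB E3 - ptB E1 +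
      ((r1 : ℂ) * ((r2 : ℂ) ^ 2 - 1)) • ptB E2).PosSemidef ∧
  -- (vii) PPT_C
  (ptC E1 + ((r2 : ℂ) - 1) • ptC E2).PosSemidef ∧
  (((r2 : ℂ) + 1) • ptC E2 - ptC E1).PosSemidef ∧
  (rhoTens ρ - ((r2 : ℂ) ^ 2 - 1) • ptC E2 - ptC E1 -
      ((r2 : ℂ) * ((r1 : ℂ) ^ 2 - 1)) • ptC E3).PosSemidef ∧
  (rhoTens ρ - ((r2 : ℂ) ^ 2 - 1) • ptC E2 - ptC E1 +
      ((r2 : ℂ) * ((r1 : ℂ) ^ 2 - 1)) • ptC E3).PosSemidef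


/-- A nonnegative complex scalar multiple of a PSD matrix is PSD. -/
lemma smulPSD {n : Type*} [Fintype n] {M : Matrix n n ℂ} (hM : M.PosSemidef)
    {c : ℂ} (hc : 0 ≤ c) : (c • M).PosSemidef := by
  constructor
  · have hcr : star c = c := by
      rw [Complex.star_def, Complex.conj_eq_iff_im]
      exact (Complex.le_def.mp hc).2.symm
    unfold Matrix.IsHermitian
    rw [Matrix.conjTranspose_smul, hcr, hM.1]
  · intro x
    exact (hM.smul hc).2 x

/-- If `(E1, E2, E3, ρ)` is NS∩PPT-feasible of size `(r1, r2)`, then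
`Λ := E1` satisfies the relaxed SDP constraints:
`0 ≤ Λ ≤ ρ⊗1_{BC}`, `Tr_{A'} Λ = 1_{BC}/(r1² r2²)`,
`|Λ^{T_{BC}}| ≤ (1/(r1 r2))·ρ⊗1_{BC}`, `|Λ^{T_B}| ≤ ρ⊗1_{BC}` and
`|Λ^{T_C}| ≤ ρ⊗1_{BC}`. -/
theorem NSPPT_feasible_implies_relaxed
    (r1 r2 : ℕ) (hr1 : 1 ≤ r1) (hr2 : 1 ≤ r2)
    (E1 E2 E3 : Matrix (A' × B × C) (A' × B × C) ℂ) (ρ : Matrix A' A' ℂ)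
    (hfeas : NSPPTFeasible r1 r2 E1 E2 E3 ρ) :
    E1.PosSemidef ∧
    (rhoTens ρ - E1).PosSemidef ∧
    trA' E1 = ((r1 : ℂ) ^ 2 * (r2 : ℂ) ^ 2)⁻¹ • (1 : Matrix (B × C) (B × C) ℂ) ∧
    (((r1 : ℂ) * (r2 : ℂ))⁻¹ • rhoTens ρ - ptBC E1).PosSemidef ∧
    (((r1 : ℂ) * (r2 : ℂ))⁻¹ • rhoTens ρ + ptBC E1).PosSemidef ∧
    (rhoTens ρ - ptB E1).PosSemidef ∧
    (rhoTens ρ + ptB E1).PosSemidef ∧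
    (rhoTens ρ - ptC E1).PosSemidef ∧
    (rhoTens ρ + ptC E1).PosSemidef := by
  obtain ⟨hE1, hE2, hE3, hρ, htr, hii, hA1, hA2, hA3, hB, hC,
    hv1, hv2, hv3, hv4, hw1, hw2, hw3, hw4, hx1, hx2, hx3, hx4⟩ := hfeas
  have hr1R : (1:ℝ) ≤ (r1:ℝ) := by exact_mod_cast hr1
  have hr2R : (1:ℝ) ≤ (r2:ℝ) := by exact_mod_cast hr2
  have c0 : (0:ℂ) ≤ (2:ℂ)⁻¹ := by
    rw [show ((2:ℂ)⁻¹) = (((2⁻¹:ℝ)):ℂ) from by push_cast; ring]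
    exact Complex.zero_le_real.mpr (by norm_num)
  have c2 : (0:ℂ) ≤ (2:ℂ) := by
    rw [show ((2:ℂ)) = (((2:ℝ)):ℂ) from by push_cast; ring]
    exact Complex.zero_le_real.mpr (by norm_num)
  have ca2 : (0:ℂ) ≤ (r2:ℂ)^2 - 1 := by
    rw [show ((r2:ℂ)^2 - 1) = ((((r2:ℝ)^2 - 1):ℝ):ℂ) from by push_cast; ring]
    exact Complex.zero_le_real.mpr (by nlinarith)
  have ca3 : (0:ℂ) ≤ (r1:ℂ)^2 - 1 := by
    rw [show ((r1:ℂ)^2 - 1) = ((((r1:ℝ)^2 - 1):ℝ):ℂ) from by push_cast; ring]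
    exact Complex.zero_le_real.mpr (by nlinarith)
  have csq1 : (0:ℂ) ≤ ((r1:ℂ) - 1)^2 := by
    rw [show (((r1:ℂ) - 1)^2) = (((((r1:ℝ) - 1)^2):ℝ):ℂ) from by push_cast; ring]
    exact Complex.zero_le_real.mpr (by positivity)
  have csq2 : (0:ℂ) ≤ ((r2:ℂ) - 1)^2 := by
    rw [show (((r2:ℂ) - 1)^2) = (((((r2:ℝ) - 1)^2):ℝ):ℂ) from by push_cast; ring]
    exact Complex.zero_le_real.mpr (by positivity)
  have cinv1 : (0:ℂ) ≤ (2*(r1:ℂ))⁻¹ := by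
    rw [show ((2*(r1:ℂ))⁻¹) = ((((2*(r1:ℝ))⁻¹):ℝ):ℂ) from by push_cast; ring]
    exact Complex.zero_le_real.mpr (by positivity)
  have cinv2 : (0:ℂ) ≤ (2*(r2:ℂ))⁻¹ := by
    rw [show ((2*(r2:ℂ))⁻¹) = ((((2*(r2:ℝ))⁻¹):ℝ):ℂ) from by push_cast; ring]
    exact Complex.zero_le_real.mpr (by positivity)
  have hne1 : (2*(r1:ℂ)) ≠ 0 := by
    have : (r1:ℂ) ≠ 0 := by exact_mod_cast Nat.cast_ne_zero.mpr (by omega)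
    simp [this]
  have hne2 : (2*(r2:ℂ)) ≠ 0 := by
    have : (r2:ℂ) ≠ 0 := by exact_mod_cast Nat.cast_ne_zero.mpr (by omega)
    simp [this]
  -- ptB E3 is PSD
  have h2r1 : ((2*(r1:ℂ)) • ptB E3).PosSemidef := by
    rw [show (2*(r1:ℂ)) • ptB E3 =
      (ptB E1 + ((r1:ℂ) - 1) • ptB E3) + (((r1:ℂ) + 1) • ptB E3 - ptB E1) from by module]
    exact hw1.add hw2
  have hF3 : (ptB E3).PosSemidef := by
    have h := smulPSD h2r1 cinv1
    rwa [smul_smul, inv_mul_cancel₀ hne1, one_smul] at h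
  -- ptC E2 is PSD
  have h2r2 : ((2*(r2:ℂ)) • ptC E2).PosSemidef := by
    rw [show (2*(r2:ℂ)) • ptC E2 =
      (ptC E1 + ((r2:ℂ) - 1) • ptC E2) + (((r2:ℂ) + 1) • ptC E2 - ptC E1) from by module]
    exact hx1.add hx2
  have hF2 : (ptC E2).PosSemidef := by
    have h := smulPSD h2r2 cinv2
    rwa [smul_smul, inv_mul_cancel₀ hne2, one_smul] at h
  refine ⟨hE1, ?_, hA1, ?_, ?_, ?_, ?_, ?_, ?_⟩
  · -- rhoTens ρ - E1
    rw [show rhoTens ρ - E1 =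
      (rhoTens ρ - (E1 + ((r2:ℂ)^2 - 1) • E2 + ((r1:ℂ)^2 - 1) • E3)) +
      (((r2:ℂ)^2 - 1) • E2 + ((r1:ℂ)^2 - 1) • E3) from by module]
    exact hii.add ((smulPSD hE2 ca2).add (smulPSD hE3 ca3))
  · -- S - ptBC E1 = (1/2)(v3 + v4)
    rw [show ((r1:ℂ)*(r2:ℂ))⁻¹ • rhoTens ρ - ptBC E1 =
      (2:ℂ)⁻¹ • ((((r2:ℂ)^2 - 1) / (r2:ℂ)) • ptBC E2 -
        (((r1:ℂ)^2 - 1) / (r1:ℂ)) • ptBC E3 +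
        ((r1:ℂ) * (r2:ℂ))⁻¹ • rhoTens ρ -
        (1 - (r2:ℂ)⁻¹ + (r1:ℂ)⁻¹) • ptBC E1) +
      (2:ℂ)⁻¹ • (((r1:ℂ) * (r2:ℂ))⁻¹ • rhoTens ρ -
        (1 + (r2:ℂ)⁻¹ - (r1:ℂ)⁻¹) • ptBC E1 -
        ((((r2:ℂ)^2 - 1) / (r2:ℂ)) • ptBC E2 -
          (((r1:ℂ)^2 - 1) / (r1:ℂ)) • ptBC E3)) from by module]
    exact (smulPSD hv3 c0).add (smulPSD hv4 c0)
  · -- S + ptBC E1 = (1/2)(v1 + v2)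
    rw [show ((r1:ℂ)*(r2:ℂ))⁻¹ • rhoTens ρ + ptBC E1 =
      (2:ℂ)⁻¹ • ((((r2:ℂ)^2 - 1) / (r2:ℂ)) • ptBC E2 +
        (((r1:ℂ)^2 - 1) / (r1:ℂ)) • ptBC E3 +
        ((r1:ℂ) * (r2:ℂ))⁻¹ • rhoTens ρ +
        (1 + (r2:ℂ)⁻¹ + (r1:ℂ)⁻¹) • ptBC E1) +
      (2:ℂ)⁻¹ • (((r1:ℂ) * (r2:ℂ))⁻¹ • rhoTens ρ +
        (1 - (r2:ℂ)⁻¹ - (r1:ℂ)⁻¹) • ptBC E1 -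
        ((((r2:ℂ)^2 - 1) / (r2:ℂ)) • ptBC E2 +
          (((r1:ℂ)^2 - 1) / (r1:ℂ)) • ptBC E3)) from by module]
    exact (smulPSD hv1 c0).add (smulPSD hv2 c0)
  · -- rhoTens ρ - ptB E1
    rw [show rhoTens ρ - ptB E1 =
      ((2:ℂ)⁻¹ • (rhoTens ρ - ((r1:ℂ)^2 - 1) • ptB E3 - ptB E1 -
          ((r1:ℂ) * ((r2:ℂ)^2 - 1)) • ptB E2) +
        (2:ℂ)⁻¹ • (rhoTens ρ - ((r1:ℂ)^2 - 1) • ptB E3 - ptB E1 +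
          ((r1:ℂ) * ((r2:ℂ)^2 - 1)) • ptB E2)) +
      ((r1:ℂ)^2 - 1) • ptB E3 from by module]
    exact ((smulPSD hw3 c0).add (smulPSD hw4 c0)).add (smulPSD hF3 ca3)
  · -- rhoTens ρ + ptB E1
    rw [show rhoTens ρ + ptB E1 =
      (((2:ℂ)⁻¹ • (rhoTens ρ - ((r1:ℂ)^2 - 1) • ptB E3 - ptB E1 -
          ((r1:ℂ) * ((r2:ℂ)^2 - 1)) • ptB E2) +
        (2:ℂ)⁻¹ • (rhoTens ρ - ((r1:ℂ)^2 - 1) • ptB E3 - ptB E1 +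
          ((r1:ℂ) * ((r2:ℂ)^2 - 1)) • ptB E2)) +
        (2:ℂ) • (ptB E1 + ((r1:ℂ) - 1) • ptB E3)) +
      ((r1:ℂ) - 1)^2 • ptB E3 from by module]
    exact (((smulPSD hw3 c0).add (smulPSD hw4 c0)).add (smulPSD hw1 c2)).add
      (smulPSD hF3 csq1)
  · -- rhoTens ρ - ptC E1
    rw [show rhoTens ρ - ptC E1 =
      ((2:ℂ)⁻¹ • (rhoTens ρ - ((r2:ℂ)^2 - 1) • ptC E2 - ptC E1 -
          ((r2:ℂ) * ((r1:ℂ)^2 - 1)) • ptC E3) +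
        (2:ℂ)⁻¹ • (rhoTens ρ - ((r2:ℂ)^2 - 1) • ptC E2 - ptC E1 +
          ((r2:ℂ) * ((r1:ℂ)^2 - 1)) • ptC E3)) +
      ((r2:ℂ)^2 - 1) • ptC E2 from by module]
    exact ((smulPSD hx3 c0).add (smulPSD hx4 c0)).add (smulPSD hF2 ca2)
  · -- rhoTens ρ + ptC E1
    rw [show rhoTens ρ + ptC E1 =
      (((2:ℂ)⁻¹ • (rhoTens ρ - ((r2:ℂ)^2 - 1) • ptC E2 - ptC E1 -
          ((r2:ℂ) * ((r1:ℂ)^2 - 1)) • ptC E3) +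
        (2:ℂ)⁻¹ • (rhoTens ρ - ((r2:ℂ)^2 - 1) • ptC E2 - ptC E1 +
          ((r2:ℂ) * ((r1:ℂ)^2 - 1)) • ptC E3)) +
        (2:ℂ) • (ptC E1 + ((r2:ℂ) - 1) • ptC E2)) +
      ((r2:ℂ) - 1)^2 • ptC E2 from by module]
    exact (((smulPSD hx3 c0).add (smulPSD hx4 c0)).add (smulPSD hx1 c2)).add
      (smulPSD hF2 csq2)
end

section
/- Fix ε ∈ [0,1] and define g(N, ε) as the infimum of Tr S over all tuples (Λ, ρ, S, m), with Λ on A'⊗B⊗C, ρ and S Hermitian on A', and m ∈ ℝ, satisfying: Tr[Λ·N^T] ≥ 1−ε; 0 ≤ Λ ≤ ρ⊗1_{BC}; ρ ≥ 0 and Tr ρ = 1; Tr_{A'} Λ = m²·1_{BC}; |Λ^{T_{BC}}| ≤ S⊗1_{BC}; |Λ^{T_B}| ≤ ρ⊗1_{BC}; |Λ^{T_C}| ≤ ρ⊗1_{BC}. If (E1, E2, E3, ρ) is NS∩PPT-feasible of size (r1, r2) for N and moreover Tr[E1·N^T] ≥ 1−ε, then g(N, ε) ≤ 1/(r1·r2).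 (Hence the ε-one-shot sum-capacity assisted by PPT-preserving and no-signalling codes is at most −log₂ g(N, ε).) -/
open Matrix
open scoped ComplexOrder

variable {A' B C : Type*} [Fintype A'] [Fintype B] [Fintype C]
  [DecidableEq A'] [DecidableEq B] [DecidableEq C]

/-- The feasible objective values of the SDP relaxation `g(N, ε)`:
`x = Tr S` for tuples `(Λ, ρ, S, m)` satisfying the listed constraints. -/
noncomputable def gValues (N : Matrix (A' × B × C) (A' × B × C) ℂ) (ε : ℝ) :
    Set ℝ :=
  {x : ℝ | ∃ (Λ : Matrix (A' × B × C) (A' × B × C) ℂ)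
      (ρ S : Matrix A' A' ℂ) (m : ℝ),
      ((1 - ε : ℝ) : ℂ) ≤ Matrix.trace (Λ * N.transpose) ∧
      Λ.PosSemidef ∧ (rhoTens ρ - Λ).PosSemidef ∧
      ρ.PosSemidef ∧ ρ.trace = 1 ∧
      S.IsHermitian ∧
      trA' Λ = ((m : ℂ) ^ 2) • (1 : Matrix (B × C) (B × C) ℂ) ∧
      (rhoTens S - ptBC Λ).PosSemidef ∧ (rhoTens S + ptBC Λ).PosSemidef ∧
      (rhoTens ρ - ptB Λ).PosSemidef ∧ (rhoTens ρ + ptB Λ).PosSemidef ∧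
      (rhoTens ρ - ptC Λ).PosSemidef ∧ (rhoTens ρ + ptC Λ).PosSemidef ∧
      S.trace = (x : ℂ)}

section Aux

variable {n : Type*} [Fintype n]

lemma psd_smul' {M : Matrix n n ℂ} (hM : M.PosSemidef) {c : ℂ} (hc : 0 ≤ c) :
    (c • M).PosSemidef := by
  have him : c.im = 0 := by
    rw [Complex.le_def] at hc
    simpa using hc.2.symm
  have hstar : star c = c := by
    simp [Complex.ext_iff, him]
  constructor
  · unfold Matrix.IsHermitian
    rw [Matrix.conjTranspose_smul, hstar, hM.1]
  · intro x
    have key : (x.sum fun i xi => x.sum fun j xj => star xi * (c • M) i j * xj) =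
        c * x.sum fun i xi => x.sum fun j xj => star xi * M i j * xj := by
      simp only [Finsupp.sum, Finset.mul_sum, Matrix.smul_apply, smul_eq_mul]
      exact Finset.sum_congr rfl fun _ _ => Finset.sum_congr rfl fun _ _ => by ring
    rw [key]
    exact mul_nonneg hc (hM.2 x)

lemma rhoTens_smul {A' B C : Type*} [Fintype A'] [Fintype B] [Fintype C]
    [DecidableEq B] [DecidableEq C]
    (c : ℂ) (ρ : Matrix A' A' ℂ) :
    (rhoTens (c • ρ) : Matrix (A' × B × C) (A' × B × C) ℂ) = c • rhoTens ρ := by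
  ext p q
  simp [rhoTens, mul_assoc]

end Aux

/-- If `(E1, E2, E3, ρ)` is NS∩PPT-feasible of size `(r1, r2)` for `N` with
channel fidelity `Tr[E1·Nᵀ] ≥ 1−ε`, then `g(N, ε) = inf gValues ≤ 1/(r1·r2)`;
hence the ε-one-shot sum-capacity assisted by PPT-preserving and
no-signalling codes is at most `−log₂ g(N, ε)`. -/

theorem one_shot_sum_capacity_gBound
    (r1 r2 : ℕ) (hr1 : 1 ≤ r1) (hr2 : 1 ≤ r2)
    (N : Matrix (A' × B × C) (A' × B × C) ℂ)
    (ε : ℝ) (hε0 : 0 ≤ ε) (hε1 : ε ≤ 1)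
    (E1 E2 E3 : Matrix (A' × B × C) (A' × B × C) ℂ) (ρ : Matrix A' A' ℂ)
    (hfeas : NSPPTFeasible r1 r2 E1 E2 E3 ρ)
    (hfid : ((1 - ε : ℝ) : ℂ) ≤ Matrix.trace (E1 * N.transpose)) :
    sInf (gValues N ε) ≤ 1 / ((r1 : ℝ) * (r2 : ℝ)) := by

  classical
  obtain ⟨h1, h2, h3, hρpsd, hρtr, hii, hiii1, hiii2, hiii3, hiv1, hiv2,
    hv1, hv2, hv3, hv4, hb1, hb2, hb3, hb4, hc1, hc2, hc3, hc4⟩ := hfeas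
  have hr1R : (1 : ℝ) ≤ (r1 : ℝ) := by exact_mod_cast hr1
  have hr2R : (1 : ℝ) ≤ (r2 : ℝ) := by exact_mod_cast hr2
  have hr1C : ((r1 : ℂ)) ≠ 0 := by
    exact_mod_cast Nat.cast_ne_zero.mpr (by omega)
  have hr2C : ((r2 : ℂ)) ≠ 0 := by
    exact_mod_cast Nat.cast_ne_zero.mpr (by omega)
  set x : ℝ := 1 / ((r1 : ℝ) * (r2 : ℝ)) with hx
  have hxnonneg : 0 ≤ x := by positivity
  set s : ℂ := ((x : ℝ) : ℂ) with hs
  have hsval : s = ((r1 : ℂ) * (r2 : ℂ))⁻¹ := by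
    rw [hs, hx]; push_cast; rw [one_div]
  -- helper nonnegativity facts
  have half_nonneg : (0 : ℂ) ≤ ((1 / 2 : ℝ) : ℂ) := Complex.zero_le_real.mpr (by norm_num)
  have half_eq : ((1 / 2 : ℝ) : ℂ) = (1 / 2 : ℂ) := by push_cast; ring
  have sq1 : (0 : ℂ) ≤ ((r1 : ℂ) ^ 2 - 1) := by
    have : ((r1 : ℂ) ^ 2 - 1) = (((r1 : ℝ) ^ 2 - 1 : ℝ) : ℂ) := by push_cast; ring
    rw [this]; exact Complex.zero_le_real.mpr (by nlinarith)
  have sq2 : (0 : ℂ) ≤ ((r2 : ℂ) ^ 2 - 1) := by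
    have : ((r2 : ℂ) ^ 2 - 1) = (((r2 : ℝ) ^ 2 - 1 : ℝ) : ℂ) := by push_cast; ring
    rw [this]; exact Complex.zero_le_real.mpr (by nlinarith)
  have hmem : x ∈ gValues N ε := by
    refine ⟨E1, ρ, s • ρ, x, hfid, h1, ?_, hρpsd, hρtr, ?_, ?_, ?_, ?_, ?_, ?_, ?_, ?_, ?_⟩
    · -- rhoTens ρ - E1 PSD
      have hd : rhoTens ρ - E1 =
          (rhoTens ρ -
            (E1 + ((r2 : ℂ) ^ 2 - 1) • E2 + ((r1 : ℂ) ^ 2 - 1) • E3)) +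
          ((r2 : ℂ) ^ 2 - 1) • E2 + ((r1 : ℂ) ^ 2 - 1) • E3 := by
        module
      rw [hd]
      exact ((hii.add (psd_smul' h2 sq2)).add (psd_smul' h3 sq1))
    · -- S Hermitian
      unfold Matrix.IsHermitian
      rw [Matrix.conjTranspose_smul, hρpsd.1]
      rw [hs]
      simp
    · -- trA' E1 = m^2 • 1
      rw [hiii1]
      congr 1
      rw [hx]
      push_cast
      rw [div_pow, one_pow, mul_pow, one_div]
    · -- rhoTens S - ptBC E1
      have hd : rhoTens (s • ρ) - ptBC E1 = ((1 / 2 : ℝ) : ℂ) •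
          (((((r2 : ℂ) ^ 2 - 1) / (r2 : ℂ)) • ptBC E2 -
              (((r1 : ℂ) ^ 2 - 1) / (r1 : ℂ)) • ptBC E3 +
              ((r1 : ℂ) * (r2 : ℂ))⁻¹ • rhoTens ρ -
              (1 - (r2 : ℂ)⁻¹ + (r1 : ℂ)⁻¹) • ptBC E1) +
           (((r1 : ℂ) * (r2 : ℂ))⁻¹ • rhoTens ρ -
              (1 + (r2 : ℂ)⁻¹ - (r1 : ℂ)⁻¹) • ptBC E1 -
              ((((r2 : ℂ) ^ 2 - 1) / (r2 : ℂ)) • ptBC E2 -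
                (((r1 : ℂ) ^ 2 - 1) / (r1 : ℂ)) • ptBC E3))) := by
        rw [rhoTens_smul, hsval, half_eq]
        match_scalars <;> ring
      rw [hd]
      exact psd_smul' (hv3.add hv4) half_nonneg
    · -- rhoTens S + ptBC E1
      have hd : rhoTens (s • ρ) + ptBC E1 = ((1 / 2 : ℝ) : ℂ) •
          ((((((r2 : ℂ) ^ 2 - 1) / (r2 : ℂ)) • ptBC E2 +
              (((r1 : ℂ) ^ 2 - 1) / (r1 : ℂ)) • ptBC E3 +
              ((r1 : ℂ) * (r2 : ℂ))⁻¹ • rhoTens ρ +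
              (1 + (r2 : ℂ)⁻¹ + (r1 : ℂ)⁻¹) • ptBC E1)) +
           (((r1 : ℂ) * (r2 : ℂ))⁻¹ • rhoTens ρ +
              (1 - (r2 : ℂ)⁻¹ - (r1 : ℂ)⁻¹) • ptBC E1 -
              ((((r2 : ℂ) ^ 2 - 1) / (r2 : ℂ)) • ptBC E2 +
                (((r1 : ℂ) ^ 2 - 1) / (r1 : ℂ)) • ptBC E3))) := by
        rw [rhoTens_smul, hsval, half_eq]
        match_scalars <;> ring
      rw [hd]
      exact psd_smul' (hv1.add hv2) half_nonneg
    · -- rhoTens ρ - ptB E1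
      have hlam : (0 : ℂ) ≤ (((((r1 : ℝ) ^ 2 - 1) / (2 * (r1 : ℝ))) : ℝ) : ℂ) :=
        Complex.zero_le_real.mpr (div_nonneg (by nlinarith) (by positivity))
      have hd : rhoTens ρ - ptB E1 = ((1 / 2 : ℝ) : ℂ) •
          ((rhoTens ρ - ((r1 : ℂ) ^ 2 - 1) • ptB E3 - ptB E1 -
              ((r1 : ℂ) * ((r2 : ℂ) ^ 2 - 1)) • ptB E2) +
           (rhoTens ρ - ((r1 : ℂ) ^ 2 - 1) • ptB E3 - ptB E1 +
              ((r1 : ℂ) * ((r2 : ℂ) ^ 2 - 1)) • ptB E2)) +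
          (((((r1 : ℝ) ^ 2 - 1) / (2 * (r1 : ℝ))) : ℝ) : ℂ) •
          ((ptB E1 + ((r1 : ℂ) - 1) • ptB E3) +
           (((r1 : ℂ) + 1) • ptB E3 - ptB E1)) := by
        push_cast
        match_scalars <;> field_simp <;> ring
      rw [hd]
      exact (psd_smul' (hb3.add hb4) half_nonneg).add (psd_smul' (hb1.add hb2) hlam)
    · -- rhoTens ρ + ptB E1
      have hl1 : (0 : ℂ) ≤ (((((r1 : ℝ) + 1) ^ 2 / (2 * (r1 : ℝ))) : ℝ) : ℂ) :=
        Complex.zero_le_real.mpr (by positivity)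
      have hl2 : (0 : ℂ) ≤ (((((r1 : ℝ) - 1) ^ 2 / (2 * (r1 : ℝ))) : ℝ) : ℂ) :=
        Complex.zero_le_real.mpr (by positivity)
      have hd : rhoTens ρ + ptB E1 = ((1 / 2 : ℝ) : ℂ) •
          ((rhoTens ρ - ((r1 : ℂ) ^ 2 - 1) • ptB E3 - ptB E1 -
              ((r1 : ℂ) * ((r2 : ℂ) ^ 2 - 1)) • ptB E2) +
           (rhoTens ρ - ((r1 : ℂ) ^ 2 - 1) • ptB E3 - ptB E1 +
              ((r1 : ℂ) * ((r2 : ℂ) ^ 2 - 1)) • ptB E2)) +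
          (((((r1 : ℝ) + 1) ^ 2 / (2 * (r1 : ℝ))) : ℝ) : ℂ) •
            (ptB E1 + ((r1 : ℂ) - 1) • ptB E3) +
          (((((r1 : ℝ) - 1) ^ 2 / (2 * (r1 : ℝ))) : ℝ) : ℂ) •
            (((r1 : ℂ) + 1) • ptB E3 - ptB E1) := by
        push_cast
        match_scalars <;> field_simp <;> ring
      rw [hd]
      exact ((psd_smul' (hb3.add hb4) half_nonneg).add
        (psd_smul' hb1 hl1)).add (psd_smul' hb2 hl2)
    · -- rhoTens ρ - ptC E1
      have hlam : (0 : ℂ) ≤ (((((r2 : ℝ) ^ 2 - 1) / (2 * (r2 : ℝ))) : ℝ) : ℂ) :=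
        Complex.zero_le_real.mpr (div_nonneg (by nlinarith) (by positivity))
      have hd : rhoTens ρ - ptC E1 = ((1 / 2 : ℝ) : ℂ) •
          ((rhoTens ρ - ((r2 : ℂ) ^ 2 - 1) • ptC E2 - ptC E1 -
              ((r2 : ℂ) * ((r1 : ℂ) ^ 2 - 1)) • ptC E3) +
           (rhoTens ρ - ((r2 : ℂ) ^ 2 - 1) • ptC E2 - ptC E1 +
              ((r2 : ℂ) * ((r1 : ℂ) ^ 2 - 1)) • ptC E3)) +
          (((((r2 : ℝ) ^ 2 - 1) / (2 * (r2 : ℝ))) : ℝ) : ℂ) •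
          ((ptC E1 + ((r2 : ℂ) - 1) • ptC E2) +
           (((r2 : ℂ) + 1) • ptC E2 - ptC E1)) := by
        push_cast
        match_scalars <;> field_simp <;> ring
      rw [hd]
      exact (psd_smul' (hc3.add hc4) half_nonneg).add (psd_smul' (hc1.add hc2) hlam)
    · -- rhoTens ρ + ptC E1
      have hl1 : (0 : ℂ) ≤ (((((r2 : ℝ) + 1) ^ 2 / (2 * (r2 : ℝ))) : ℝ) : ℂ) :=
        Complex.zero_le_real.mpr (by positivity)
      have hl2 : (0 : ℂ) ≤ (((((r2 : ℝ) - 1) ^ 2 / (2 * (r2 : ℝ))) : ℝ) : ℂ) :=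
        Complex.zero_le_real.mpr (by positivity)
      have hd : rhoTens ρ + ptC E1 = ((1 / 2 : ℝ) : ℂ) •
          ((rhoTens ρ - ((r2 : ℂ) ^ 2 - 1) • ptC E2 - ptC E1 -
              ((r2 : ℂ) * ((r1 : ℂ) ^ 2 - 1)) • ptC E3) +
           (rhoTens ρ - ((r2 : ℂ) ^ 2 - 1) • ptC E2 - ptC E1 +
              ((r2 : ℂ) * ((r1 : ℂ) ^ 2 - 1)) • ptC E3)) +
          (((((r2 : ℝ) + 1) ^ 2 / (2 * (r2 : ℝ))) : ℝ) : ℂ) •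
            (ptC E1 + ((r2 : ℂ) - 1) • ptC E2) +
          (((((r2 : ℝ) - 1) ^ 2 / (2 * (r2 : ℝ))) : ℝ) : ℂ) •
            (((r2 : ℂ) + 1) • ptC E2 - ptC E1) := by
        push_cast
        match_scalars <;> field_simp <;> ring
      rw [hd]
      exact ((psd_smul' (hc3.add hc4) half_nonneg).add
        (psd_smul' hc1 hl1)).add (psd_smul' hc2 hl2)
    · -- trace S = x
      rw [Matrix.trace_smul, hρtr, smul_eq_mul, mul_one, hs]
  by_cases hbd : BddBelow (gValues N ε)
  · exact csInf_le hbd hmem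
  · rw [Real.sInf_of_not_bddBelow hbd]
    positivity
end

section
/- Weak duality for the SDP Γ: if (R, ρ, m) is primal-feasible for N and (V, Y, W, μ) is dual-feasible for N, then Tr[R·N^T] ≤ μ. Consequently, Γ(N) ≤ μ for every dual-feasible quadruple (V, Y, W, μ). -/
open Matrix
open scoped ComplexOrder Kronecker

variable {A' B C : Type*} [Fintype A'] [Fintype B] [Fintype C]
  [DecidableEq A'] [DecidableEq B] [DecidableEq C]

/-- The triple `(R, ρ, m)` is primal-feasible for (the SDP `Γ` associated
with) `N`: `R ≥ 0`, `ρ ≥ 0`, `Tr ρ = 1`, `Tr_{A'} R = m·1_{BC}`, and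
`−ρ⊗1_{BC} ≤ R^{T_{BC}} ≤ ρ⊗1_{BC}`. -/
def PrimalFeasible (N R : Matrix (A' × B × C) (A' × B × C) ℂ)
    (ρ : Matrix A' A' ℂ) (m : ℝ) : Prop :=
  R.PosSemidef ∧ ρ.PosSemidef ∧ ρ.trace = 1 ∧
  (∀ w v : B × C, (∑ x : A', R (x, w) (x, v)) = (m : ℂ) * (if w = v then 1 else 0)) ∧
  (rhoTens ρ - ptBC R).PosSemidef ∧ (rhoTens ρ + ptBC R).PosSemidef

/-- The SDP value `Γ(N)`: the supremum of `Tr[R·Nᵀ]` over all primal-feasible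
triples `(R, ρ, m)`. -/
noncomputable def Gamma (N : Matrix (A' × B × C) (A' × B × C) ℂ) : ℝ :=
  sSup {x : ℝ | ∃ (R : Matrix (A' × B × C) (A' × B × C) ℂ)
    (ρ : Matrix A' A' ℂ) (m : ℝ),
    PrimalFeasible N R ρ m ∧ Matrix.trace (R * N.transpose) = (x : ℂ)}

/-- `1_{A'} ⊗ W` for a matrix `W` on `B⊗C`. -/
noncomputable def idTens (W : Matrix (B × C) (B × C) ℂ) :
    Matrix (A' × B × C) (A' × B × C) ℂ :=
  Matrix.of fun p q => (if p.1 = q.1 then 1 else 0) * W p.2 q.2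

/-- Partial trace over `B` and `C`. -/
noncomputable def trBC (X : Matrix (A' × B × C) (A' × B × C) ℂ) :
    Matrix A' A' ℂ :=
  Matrix.of fun a d => ∑ w : B × C, X (a, w) (d, w)

/-- The quadruple `(V, Y, W, μ)` is dual-feasible for `N`:
`V, Y ≥ 0`, `Nᵀ ≤ (V − Y)^{T_{BC}} + 1_{A'}⊗W`, `Tr_{BC}(V + Y) ≤ μ·1_{A'}`
and `Tr W ≤ 0`. -/
def DualFeasible (N V Y : Matrix (A' × B × C) (A' × B × C) ℂ)
    (W : Matrix (B × C) (B × C) ℂ) (μ : ℝ) : Prop :=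
  V.PosSemidef ∧ Y.PosSemidef ∧ W.IsHermitian ∧
  ((ptBC (V - Y) + idTens W) - N.transpose).PosSemidef ∧
  ((μ : ℂ) • (1 : Matrix A' A' ℂ) - trBC (V + Y)).PosSemidef ∧
  W.trace ≤ (0 : ℂ)


section AuxGeneral
set_option linter.unusedSectionVars false
variable {n : Type*} [Fintype n] [DecidableEq n]

lemma psd_diag_nonneg {M : Matrix n n ℂ} (h : M.PosSemidef) (i : n) : 0 ≤ M i i := by
  exact h.diag_nonneg

lemma trace_nonneg' {M : Matrix n n ℂ} (h : M.PosSemidef) : 0 ≤ M.trace :=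
  Finset.sum_nonneg fun i _ => psd_diag_nonneg h i

lemma trace_mul_nonneg' {P Q : Matrix n n ℂ} (hP : P.PosSemidef) (hQ : Q.PosSemidef) :
    0 ≤ (P * Q).trace := by
  obtain ⟨A, rfl⟩ : ∃ A : Matrix n n ℂ, P = Aᴴ * A := by
    open scoped MatrixOrder in
    obtain ⟨A, hA⟩ := CStarAlgebra.nonneg_iff_eq_star_mul_self.mp hP.nonneg
    exact ⟨A, by rw [hA, Matrix.star_eq_conjTranspose]⟩
  rw [Matrix.mul_assoc, ← Matrix.mul_assoc, ← Matrix.trace_mul_cycle]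
  exact trace_nonneg' (hQ.mul_mul_conjTranspose_same A)

lemma trace_mul_sum (X M : Matrix n n ℂ) :
    (X * M).trace = ∑ z : n × n, X z.1 z.2 * M z.2 z.1 := by
  rw [Fintype.sum_prod_type]
  simp [Matrix.trace, Matrix.mul_apply, Matrix.diag]

lemma sum_pair_diag {M : Type*} [AddCommMonoid M] (f : n → n → M) :
    (∑ z : n × n, if z.1 = z.2 then f z.1 z.2 else 0) = ∑ i : n, f i i := by
  rw [Fintype.sum_prod_type]
  simp [Finset.sum_ite_eq]

lemma sum_pair_diag' {M : Type*} [AddCommMonoid M] (f : n → n → M) :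
    (∑ z : n × n, if z.2 = z.1 then f z.1 z.2 else 0) = ∑ i : n, f i i := by
  rw [Fintype.sum_prod_type]
  simp [Finset.sum_ite_eq']

end AuxGeneral

/-- Reindexing bijection used for the `idTens` trace computation. -/
def reIdx (A' B C : Type*) :
    ((B × C) × (B × C)) × (A' × A') ≃ (A' × B × C) × (A' × B × C) where
  toFun z := ((z.2.1, z.1.1), (z.2.2, z.1.2))
  invFun z := ((z.1.2, z.2.2), (z.1.1, z.2.1))
  left_inv := fun ⟨⟨_, _⟩, ⟨_, _⟩⟩ => rfl
  right_inv := fun ⟨⟨_, _⟩, ⟨_, _⟩⟩ => rfl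

section AuxTens
set_option linter.unusedSectionVars false

lemma ptBC_sub (V Y : Matrix (A' × B × C) (A' × B × C) ℂ) :
    ptBC (V - Y) = ptBC V - ptBC Y := by
  ext p q; simp [ptBC]

lemma trace_mul_ptBC (X Z : Matrix (A' × B × C) (A' × B × C) ℂ) :
    (X * ptBC Z).trace = (ptBC X * Z).trace := by
  rw [trace_mul_sum, trace_mul_sum]
  exact Fintype.sum_equiv
    (Function.Involutive.toPerm
      (fun z : (A' × B × C) × (A' × B × C) => ((z.1.1, z.2.2), (z.2.1, z.1.2)))
      (fun z => by simp))
    _ _ (fun z => by simp [ptBC, Function.Involutive.toPerm])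

lemma trace_trBC (X : Matrix (A' × B × C) (A' × B × C) ℂ) :
    (trBC X).trace = X.trace := by
  simp only [Matrix.trace, Matrix.diag, trBC, Matrix.of_apply]
  rw [Fintype.sum_prod_type (f := fun p : A' × B × C => X p p)]

lemma trace_rhoTens_mul (ρ : Matrix A' A' ℂ)
    (X : Matrix (A' × B × C) (A' × B × C) ℂ) :
    (rhoTens ρ * X).trace = (ρ * trBC X).trace := by
  rw [trace_mul_sum, trace_mul_sum]
  rw [← Equiv.sum_comp (Equiv.prodProdProdComm A' A' (B × C) (B × C))
    (fun z : (A' × B × C) × (A' × B × C) => rhoTens ρ z.1 z.2 * X z.2 z.1)]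
  rw [Fintype.sum_prod_type, Fintype.sum_prod_type]
  simp only [Equiv.prodProdProdComm_apply, rhoTens, trBC, Matrix.of_apply,
    mul_ite, mul_one, mul_zero, ite_mul, one_mul, zero_mul, Finset.mul_sum]
  conv_rhs => rw [Fintype.sum_prod_type]
  refine Finset.sum_congr rfl fun a _ => Finset.sum_congr rfl fun b _ => ?_
  exact sum_pair_diag (n := B × C) (fun w v => ρ a b * X (b, v) (a, w))

lemma trace_mul_idTens (R : Matrix (A' × B × C) (A' × B × C) ℂ)
    (W : Matrix (B × C) (B × C) ℂ) (m : ℝ)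
    (h4 : ∀ w v : B × C, (∑ x : A', R (x, w) (x, v)) = (m : ℂ) * (if w = v then 1 else 0)) :
    (R * idTens W).trace = (m : ℂ) * W.trace := by
  rw [trace_mul_sum]
  rw [← Equiv.sum_comp (reIdx A' B C)
    (fun z : (A' × B × C) × (A' × B × C) => R z.1 z.2 * idTens W z.2 z.1)]
  rw [Fintype.sum_prod_type, Fintype.sum_prod_type]
  simp only [reIdx, Equiv.coe_fn_mk, idTens, Matrix.of_apply,
    mul_ite, mul_one, mul_zero, ite_mul, one_mul, zero_mul,
    Finset.sum_ite_eq, Finset.sum_ite_eq', Finset.mem_univ, if_true,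
    Finset.sum_const_zero]
  have step : ∀ w v : B × C,
      (∑ z : A' × A', if z.2 = z.1 then R (z.1, w) (z.2, v) * W v w else 0)
        = (m : ℂ) * ((if w = v then (1:ℂ) else 0) * W v w) := by
    intro w v
    rw [sum_pair_diag' (n := A') (fun a b => R (a, w) (b, v) * W v w),
      ← Finset.sum_mul, h4, mul_assoc]
  simp only [step, mul_ite, mul_one, mul_zero, ite_mul, one_mul, zero_mul,
    Finset.sum_ite_eq, Finset.mem_univ, if_true, Finset.sum_const_zero]
  simp [Matrix.trace, Matrix.diag, Finset.mul_sum]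

lemma mu_nonneg' {V Y : Matrix (A' × B × C) (A' × B × C) ℂ} {μ : ℝ}
    (hA' : Nonempty A') (hV : V.PosSemidef) (hY : Y.PosSemidef)
    (hμ1 : ((μ : ℂ) • (1 : Matrix A' A' ℂ) - trBC (V + Y)).PosSemidef) :
    (0 : ℝ) ≤ μ := by
  have h1 : 0 ≤ ((μ : ℂ) • (1 : Matrix A' A' ℂ) - trBC (V + Y)).trace := trace_nonneg' hμ1
  have h2 : 0 ≤ (trBC (V + Y)).trace := by
    rw [trace_trBC]; exact trace_nonneg' (hV.add hY)
  rw [Matrix.trace_sub, Matrix.trace_smul, Matrix.trace_one, smul_eq_mul] at h1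
  have h3 : 0 ≤ (μ : ℂ) * (Fintype.card A' : ℂ) := le_trans h2 (sub_nonneg.mp h1)
  have h4 : (0 : ℝ) ≤ μ * (Fintype.card A' : ℝ) := by
    rw [← Complex.zero_le_real]
    push_cast
    exact h3
  have h5 : (0 : ℝ) < (Fintype.card A' : ℝ) := by
    exact_mod_cast Fintype.card_pos
  exact (mul_nonneg_iff_of_pos_right h5).mp h4

end AuxTens

lemma weak_trace_bound
    (N : Matrix (A' × B × C) (A' × B × C) ℂ)
    (R : Matrix (A' × B × C) (A' × B × C) ℂ) (ρ : Matrix A' A' ℂ) (m : ℝ)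
    (V Y : Matrix (A' × B × C) (A' × B × C) ℂ)
    (W : Matrix (B × C) (B × C) ℂ) (μ : ℝ)
    (hp : PrimalFeasible N R ρ m) (hd : DualFeasible N V Y W μ) :
    Matrix.trace (R * N.transpose) ≤ ((μ : ℝ) : ℂ) := by
  obtain ⟨hR, hρ, hρtr, hmarg, hps1, hps2⟩ := hp
  obtain ⟨hV, hY, hW, hslack, hμ1, hTrW⟩ := hd
  have hA' : Nonempty A' := by
    by_contra h
    rw [not_nonempty_iff] at h
    rw [Matrix.trace] at hρtr
    simp [Finset.univ_eq_empty] at hρtr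
  by_cases hBC : Nonempty (B × C)
  · have hm0 : 0 ≤ (m : ℂ) := by
      obtain ⟨w⟩ := hBC
      rw [show (m : ℂ) = ∑ x : A', R (x, w) (x, w) by simpa using (hmarg w w).symm]
      exact Finset.sum_nonneg fun x _ => psd_diag_nonneg hR (x, w)
    have s1 : 0 ≤ (R * ((ptBC (V - Y) + idTens W) - N.transpose)).trace :=
      trace_mul_nonneg' hR hslack
    have s3 : (ptBC R * V).trace ≤ (rhoTens ρ * V).trace := by
      have h := trace_mul_nonneg' hps1 hV
      rwa [Matrix.sub_mul, Matrix.trace_sub, sub_nonneg] at h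
    have s4 : -(ptBC R * Y).trace ≤ (rhoTens ρ * Y).trace := by
      have h := trace_mul_nonneg' hps2 hY
      rw [Matrix.add_mul, Matrix.trace_add] at h
      rwa [← sub_nonneg, sub_neg_eq_add]
    have s5 : (ρ * trBC (V + Y)).trace ≤ (μ : ℂ) * ρ.trace := by
      have h := trace_mul_nonneg' hρ hμ1
      rwa [Matrix.mul_sub, Matrix.trace_sub, sub_nonneg, Matrix.mul_smul,
        Matrix.mul_one, Matrix.trace_smul, smul_eq_mul] at h
    calc Matrix.trace (R * N.transpose)
        ≤ Matrix.trace (R * N.transpose)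
          + (R * ((ptBC (V - Y) + idTens W) - N.transpose)).trace :=
          le_add_of_nonneg_right s1
      _ = (R * ptBC (V - Y)).trace + (R * idTens W).trace := by
          rw [Matrix.mul_sub, Matrix.mul_add, Matrix.trace_sub, Matrix.trace_add]; ring
      _ ≤ (R * ptBC (V - Y)).trace + 0 := by
          refine add_le_add_right ?_ _
          rw [trace_mul_idTens R W m hmarg]
          calc (m : ℂ) * W.trace ≤ (m : ℂ) * 0 := mul_le_mul_of_nonneg_left hTrW hm0
            _ = 0 := mul_zero _
      _ = (ptBC R * V).trace - (ptBC R * Y).trace := by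
          rw [add_zero, trace_mul_ptBC, Matrix.mul_sub, Matrix.trace_sub]
      _ = (ptBC R * V).trace + -(ptBC R * Y).trace := sub_eq_add_neg _ _
      _ ≤ (rhoTens ρ * V).trace + (rhoTens ρ * Y).trace := add_le_add s3 s4
      _ = (ρ * trBC (V + Y)).trace := by
          rw [← Matrix.trace_add, ← Matrix.mul_add, trace_rhoTens_mul]
      _ ≤ (μ : ℂ) * ρ.trace := s5
      _ = ((μ : ℝ) : ℂ) := by rw [hρtr, mul_one]
  · rw [not_nonempty_iff] at hBC
    have h0 : Matrix.trace (R * N.transpose) = 0 := by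
      have : IsEmpty (A' × B × C) := ⟨fun p => hBC.false p.2⟩
      rw [Matrix.trace]
      simp [Finset.univ_eq_empty]
    rw [h0, ← Complex.ofReal_zero, Complex.real_le_real]
    exact mu_nonneg' hA' hV hY hμ1

/-- Weak duality for the SDP `Γ`: if `(R, ρ, m)` is primal-feasible and
`(V, Y, W, μ)` is dual-feasible for `N`, then `Tr[R·Nᵀ] ≤ μ`; consequently
`Γ(N) ≤ μ`. -/
theorem Gamma_weak_duality
    (N : Matrix (A' × B × C) (A' × B × C) ℂ)
    (R : Matrix (A' × B × C) (A' × B × C) ℂ) (ρ : Matrix A' A' ℂ) (m : ℝ)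
    (V Y : Matrix (A' × B × C) (A' × B × C) ℂ)
    (W : Matrix (B × C) (B × C) ℂ) (μ : ℝ)
    (hp : PrimalFeasible N R ρ m) (hd : DualFeasible N V Y W μ) :
    Matrix.trace (R * N.transpose) ≤ ((μ : ℝ) : ℂ) ∧ Gamma N ≤ μ := by
  have hA' : Nonempty A' := by
    by_contra h
    rw [not_nonempty_iff] at h
    have := hp.2.2.1
    rw [Matrix.trace] at this
    simp [Finset.univ_eq_empty] at this
  have hμ0 : (0 : ℝ) ≤ μ := mu_nonneg' hA' hd.1 hd.2.1 hd.2.2.2.2.1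
  refine ⟨weak_trace_bound N R ρ m V Y W μ hp hd, ?_⟩
  apply Real.sSup_le _ hμ0
  rintro x ⟨R', ρ', m', hp', htr⟩
  have h := weak_trace_bound N R' ρ' m' V Y W μ hp' hd
  rw [htr] at h
  exact Complex.real_le_real.mp h
end

section
/- Supermultiplicativity of Γ: let N1 be a matrix on A'_1⊗B_1⊗C_1 and N2 a matrix on A'_2⊗B_2⊗C_2, both positive semidefinite. If (R1, ρ1, m1) is primal-feasible for N1 and (R2, ρ2, m2) is primal-feasible for N2, then (R1⊗R2, ρ1⊗ρ2, m1·m2) is primal-feasible for N1⊗N2 (with the tensor factors regrouped so that A' = A'_1⊗A'_2, B = B_1⊗B_2, C = C_1⊗C_2), and Tr[(R1⊗R2)·(N1⊗N2)^T] = Tr[R1·N1^T]·Tr[R2·N2^T]. Consequently, Γ(N1⊗N2) ≥ Γ(N1)·Γ(N2). -/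
open Matrix
open scoped ComplexOrder Kronecker

variable {A' B C : Type*} [Fintype A'] [Fintype B] [Fintype C]
  [DecidableEq A'] [DecidableEq B] [DecidableEq C]

/-- The tensor product of matrices on `A'_1⊗B_1⊗C_1` and `A'_2⊗B_2⊗C_2`,
with tensor factors regrouped so that `A' = A'_1⊗A'_2`, `B = B_1⊗B_2`,
`C = C_1⊗C_2`. -/
noncomputable def regroup {A1 B1 C1 A2 B2 C2 : Type*}
    (N1 : Matrix (A1 × B1 × C1) (A1 × B1 × C1) ℂ)
    (N2 : Matrix (A2 × B2 × C2) (A2 × B2 × C2) ℂ) :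
    Matrix ((A1 × A2) × (B1 × B2) × (C1 × C2))
      ((A1 × A2) × (B1 × B2) × (C1 × C2)) ℂ :=
  Matrix.of fun p q =>
    N1 (p.1.1, p.2.1.1, p.2.2.1) (q.1.1, q.2.1.1, q.2.2.1) *
    N2 (p.1.2, p.2.1.2, p.2.2.2) (q.1.2, q.2.1.2, q.2.2.2)

/-! ### Auxiliary lemmas -/

section Aux

lemma psd_diag {n : Type*} [Fintype n] [DecidableEq n]
    {W : Matrix n n ℂ} (hW : W.PosSemidef) (p : n) : 0 ≤ W p p := by
  simpa [dotProduct, Pi.single_apply, mulVec] using hW.dotProduct_mulVec_nonneg (Pi.single p 1)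

lemma single_quad {n : Type*} [Fintype n] [DecidableEq n]
    (W : Matrix n n ℂ) (a b : ℂ) (p q : n) :
    star (Pi.single p a) ⬝ᵥ W *ᵥ (Pi.single q b) = (starRingEnd ℂ a) * W p q * b := by
  simp [dotProduct, mulVec, Pi.single_apply, Finset.mul_sum, mul_comm, mul_assoc, mul_left_comm,
    apply_ite (starRingEnd ℂ)]

lemma psd_diag_re_le_trace {n : Type*} [Fintype n] [DecidableEq n]
    {W : Matrix n n ℂ} (hW : W.PosSemidef) (p : n) :
    (W p p).re ≤ W.trace.re := by
  have h : W.trace.re = ∑ i, (W i i).re := by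
    simp [Matrix.trace, Matrix.diag, Complex.re_sum]
  rw [h]
  exact Finset.single_le_sum (f := fun i => (W i i).re)
    (fun i _ => ((Complex.le_def).mp (psd_diag hW i)).1) (Finset.mem_univ p)

lemma psd_entry_le_trace {n : Type*} [Fintype n] [DecidableEq n]
    {W : Matrix n n ℂ} (hW : W.PosSemidef) (p q : n) :
    ‖W p q‖ ≤ W.trace.re := by
  by_cases hpq : p = q
  · subst hpq
    have h1 := (Complex.le_def).mp (psd_diag hW p)
    have : ‖W p p‖ = (W p p).re := by
      rw [Complex.norm_def, Complex.normSq_apply, ← h1.2]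
      simp only [Complex.zero_im, mul_zero, sub_zero, add_zero, Complex.zero_re]
      rw [show (W p p).re * (W p p).re = (W p p).re ^ 2 by ring, Real.sqrt_sq h1.1]
    rw [this]; exact psd_diag_re_le_trace hW p
  · set z := W p q with hz
    by_cases hz0 : z = 0
    · rw [hz0]
      simp only [norm_zero]
      calc (0:ℝ) ≤ (W p p).re := ((Complex.le_def).mp (psd_diag hW p)).1
        _ ≤ W.trace.re := psd_diag_re_le_trace hW p
    set r : ℝ := ‖z‖ with hr
    have hrpos : 0 < r := by rw [hr]; exact (norm_pos_iff.mpr hz0)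
    have hn : z * (starRingEnd ℂ) z = ((r:ℂ))^2 := by
      rw [Complex.mul_conj, Complex.normSq_eq_norm_sq]; push_cast; rfl
    set v : n → ℂ := Pi.single p (r:ℂ) + Pi.single q (-(starRingEnd ℂ) z) with hv
    have h0 := hW.dotProduct_mulVec_nonneg v
    have hqp : W q p = (starRingEnd ℂ) z := by
      rw [hz, ← Complex.star_def, ← Matrix.conjTranspose_apply, hW.1]
    have hexp : star v ⬝ᵥ W *ᵥ v = ((r:ℂ))^2 * (W p p + W q q - 2*(r:ℂ)) := by
      rw [hv]
      rw [star_add, mulVec_add, dotProduct_add, add_dotProduct, add_dotProduct]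
      have key : ∀ (a b : ℂ) (i j : n), star (Pi.single i a) ⬝ᵥ W *ᵥ (Pi.single j b)
          = (starRingEnd ℂ a) * W i j * b := single_quad W
      rw [key, key, key, key, hqp]
      simp only [map_neg, Complex.conj_conj, Complex.conj_ofReal]
      linear_combination (W q q - 2*(r:ℂ)) * hn
    rw [hexp] at h0
    have h0re := ((Complex.le_def).mp h0).1
    have hrw : (((r:ℂ))^2 * (W p p + W q q - 2*(r:ℂ))).re
        = r^2 * ((W p p).re + (W q q).re - 2*r) := by
      have : ((r:ℂ))^2 = ((r^2 : ℝ) : ℂ) := by push_cast; ring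
      rw [this, Complex.re_ofReal_mul]
      simp [Complex.sub_re, Complex.add_re, Complex.ofReal_re]
    rw [hrw] at h0re
    simp only [Complex.zero_re] at h0re
    have h2 : 0 ≤ (W p p).re + (W q q).re - 2*r := by
      nlinarith [mul_pos hrpos hrpos]
    have hp := psd_diag_re_le_trace hW p
    have hq := psd_diag_re_le_trace hW q
    linarith

lemma posSemidef_kronecker {m n : Type*} [Fintype m] [Fintype n] [DecidableEq m] [DecidableEq n]
    {X : Matrix m m ℂ} {Y : Matrix n n ℂ} (hX : X.PosSemidef) (hY : Y.PosSemidef) :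
    (X ⊗ₖ Y).PosSemidef := by
  exact hX.kronecker hY

lemma posSemidef_half {n : Type*} [Fintype n] {T : Matrix n n ℂ}
    (h : (T + T).PosSemidef) : T.PosSemidef := by
  have h2 : T = (2⁻¹ : ℂ) • (T + T) := by
    ext i j; simp [Matrix.add_apply, Matrix.smul_apply]; ring
  refine Matrix.PosSemidef.of_dotProduct_mulVec_nonneg ?_ ?_
  · have := h.1
    rw [h2]
    unfold Matrix.IsHermitian
    rw [Matrix.conjTranspose_smul, this]
    congr 1
    simp [Complex.star_def, map_inv₀]
  · intro x
    rw [h2, Matrix.smul_mulVec, dotProduct_smul]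
    have hge := h.dotProduct_mulVec_nonneg x
    have : (0:ℂ) ≤ (2⁻¹ : ℂ) := by
      rw [show ((2:ℂ))⁻¹ = (((2:ℝ))⁻¹ : ℝ) by norm_num, Complex.zero_le_real]
      norm_num
    calc (0:ℂ) = (2⁻¹ : ℂ) * 0 := by ring
      _ ≤ (2⁻¹ : ℂ) * (star x ⬝ᵥ (T + T) *ᵥ x) := by
          exact mul_le_mul_of_nonneg_left hge this
      _ = (2⁻¹ : ℂ) • (star x ⬝ᵥ (T + T) *ᵥ x) := by simp
end Aux

section Tensor

variable {A1 B1 C1 A2 B2 C2 : Type*}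
  [Fintype A1] [Fintype B1] [Fintype C1] [Fintype A2] [Fintype B2] [Fintype C2]
  [DecidableEq A1] [DecidableEq B1] [DecidableEq C1]
  [DecidableEq A2] [DecidableEq B2] [DecidableEq C2]

/-- The regrouping equivalence. -/
def eqv : ((A1 × B1 × C1) × (A2 × B2 × C2)) ≃ ((A1 × A2) × (B1 × B2) × (C1 × C2)) where
  toFun z := ((z.1.1, z.2.1), (z.1.2.1, z.2.2.1), (z.1.2.2, z.2.2.2))
  invFun p := ((p.1.1, p.2.1.1, p.2.2.1), (p.1.2, p.2.1.2, p.2.2.2))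
  left_inv := fun _ => rfl
  right_inv := fun _ => rfl

lemma regroup_eq_submatrix
    (X : Matrix (A1 × B1 × C1) (A1 × B1 × C1) ℂ)
    (Y : Matrix (A2 × B2 × C2) (A2 × B2 × C2) ℂ) :
    regroup X Y = (X ⊗ₖ Y).submatrix
      (fun p => ((p.1.1, p.2.1.1, p.2.2.1), (p.1.2, p.2.1.2, p.2.2.2)))
      (fun p => ((p.1.1, p.2.1.1, p.2.2.1), (p.1.2, p.2.1.2, p.2.2.2))) := rfl

lemma regroup_posSemidef
    {X : Matrix (A1 × B1 × C1) (A1 × B1 × C1) ℂ}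
    {Y : Matrix (A2 × B2 × C2) (A2 × B2 × C2) ℂ}
    (hX : X.PosSemidef) (hY : Y.PosSemidef) : (regroup X Y).PosSemidef := by
  rw [regroup_eq_submatrix]
  exact (posSemidef_kronecker hX hY).submatrix _

lemma ptBC_regroup
    (R1 : Matrix (A1 × B1 × C1) (A1 × B1 × C1) ℂ)
    (R2 : Matrix (A2 × B2 × C2) (A2 × B2 × C2) ℂ) :
    ptBC (regroup R1 R2) = regroup (ptBC R1) (ptBC R2) := rfl

lemma rhoTens_kron (ρ1 : Matrix A1 A1 ℂ) (ρ2 : Matrix A2 A2 ℂ) :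
    (rhoTens (ρ1 ⊗ₖ ρ2) :
      Matrix ((A1 × A2) × (B1 × B2) × (C1 × C2)) ((A1 × A2) × (B1 × B2) × (C1 × C2)) ℂ)
      = regroup (rhoTens ρ1) (rhoTens ρ2) := by
  ext p q
  simp only [rhoTens, regroup, Matrix.of_apply, Matrix.kroneckerMap_apply]
  by_cases h1 : (p.2.1.1, p.2.2.1) = (q.2.1.1, q.2.2.1) <;>
    by_cases h2 : (p.2.1.2, p.2.2.2) = (q.2.1.2, q.2.2.2)
  · have : p.2 = q.2 := by
      rw [Prod.ext_iff] at h1 h2 ⊢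
      exact ⟨Prod.ext h1.1 h2.1, Prod.ext h1.2 h2.2⟩
    simp [this, h1, h2]
  · have : p.2 ≠ q.2 := by
      intro h; apply h2; rw [h]
    simp [this, h1, h2]
  · have : p.2 ≠ q.2 := by
      intro h; apply h1; rw [h]
    simp [this, h1, h2]
  · have : p.2 ≠ q.2 := by
      intro h; apply h1; rw [h]
    simp [this, h1, h2]

lemma trace_mul_eq_sum
    {n : Type*} [Fintype n] (R N : Matrix n n ℂ) :
    Matrix.trace (R * N.transpose) = ∑ a : n, ∑ b : n, R a b * N a b := by
  simp [Matrix.trace, Matrix.diag, Matrix.mul_apply, Matrix.transpose_apply]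

lemma trace_regroup_mul
    (R1 N1 : Matrix (A1 × B1 × C1) (A1 × B1 × C1) ℂ)
    (R2 N2 : Matrix (A2 × B2 × C2) (A2 × B2 × C2) ℂ) :
    Matrix.trace (regroup R1 R2 * (regroup N1 N2).transpose) =
      Matrix.trace (R1 * N1.transpose) * Matrix.trace (R2 * N2.transpose) := by
  rw [trace_mul_eq_sum, trace_mul_eq_sum, trace_mul_eq_sum]
  calc ∑ p, ∑ q, regroup R1 R2 p q * regroup N1 N2 p q
      = ∑ z : (A1 × B1 × C1) × (A2 × B2 × C2), ∑ w : (A1 × B1 × C1) × (A2 × B2 × C2),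
          regroup R1 R2 (eqv z) (eqv w) * regroup N1 N2 (eqv z) (eqv w) := by
        rw [← Equiv.sum_comp (eqv (A1 := A1) (B1 := B1) (C1 := C1) (A2 := A2) (B2 := B2) (C2 := C2))
          (fun p => ∑ q, regroup R1 R2 p q * regroup N1 N2 p q)]
        refine Finset.sum_congr rfl fun z _ => ?_
        rw [← Equiv.sum_comp (eqv (A1 := A1) (B1 := B1) (C1 := C1) (A2 := A2) (B2 := B2) (C2 := C2))
          (fun q => regroup R1 R2 (eqv z) q * regroup N1 N2 (eqv z) q)]
    _ = ∑ z1, ∑ z2, ∑ w1, ∑ w2,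
          (R1 z1 w1 * N1 z1 w1) * (R2 z2 w2 * N2 z2 w2) := by
        rw [Fintype.sum_prod_type]
        refine Finset.sum_congr rfl fun z1 _ => ?_
        refine Finset.sum_congr rfl fun z2 _ => ?_
        rw [Fintype.sum_prod_type]
        refine Finset.sum_congr rfl fun w1 _ => Finset.sum_congr rfl fun w2 _ => ?_
        show (R1 z1 w1 * R2 z2 w2) * (N1 z1 w1 * N2 z2 w2) = _
        ring
    _ = ∑ z1, ∑ w1, ∑ z2, ∑ w2,
          (R1 z1 w1 * N1 z1 w1) * (R2 z2 w2 * N2 z2 w2) := by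
        exact Finset.sum_congr rfl fun z1 _ => Finset.sum_comm
    _ = (∑ a, ∑ b, R1 a b * N1 a b) * (∑ a, ∑ b, R2 a b * N2 a b) := by
        symm
        rw [Finset.sum_mul]
        refine Finset.sum_congr rfl fun z1 _ => ?_
        rw [Finset.sum_mul]
        refine Finset.sum_congr rfl fun w1 _ => ?_
        rw [Finset.mul_sum]
        refine Finset.sum_congr rfl fun z2 _ => ?_
        rw [Finset.mul_sum]

lemma tensor_feasible
    {N1 R1 : Matrix (A1 × B1 × C1) (A1 × B1 × C1) ℂ} {ρ1 : Matrix A1 A1 ℂ} {m1 : ℝ}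
    {N2 R2 : Matrix (A2 × B2 × C2) (A2 × B2 × C2) ℂ} {ρ2 : Matrix A2 A2 ℂ} {m2 : ℝ}
    (h1 : PrimalFeasible N1 R1 ρ1 m1) (h2 : PrimalFeasible N2 R2 ρ2 m2) :
    PrimalFeasible (regroup N1 N2) (regroup R1 R2) (ρ1 ⊗ₖ ρ2) (m1 * m2) := by
  obtain ⟨hR1, hρ1, htr1, hpt1, hY1, hZ1⟩ := h1
  obtain ⟨hR2, hρ2, htr2, hpt2, hY2, hZ2⟩ := h2
  refine ⟨regroup_posSemidef hR1 hR2, posSemidef_kronecker hρ1 hρ2, ?_, ?_, ?_, ?_⟩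
  · rw [Matrix.trace_kronecker, htr1, htr2, mul_one]
  · intro w v
    have hsum : (∑ x : A1 × A2, regroup R1 R2 (x, w) (x, v))
        = (∑ x1 : A1, R1 (x1, (w.1.1, w.2.1)) (x1, (v.1.1, v.2.1)))
        * (∑ x2 : A2, R2 (x2, (w.1.2, w.2.2)) (x2, (v.1.2, v.2.2))) := by
      rw [Fintype.sum_prod_type, Finset.sum_mul_sum]
      rfl
    rw [hsum, hpt1, hpt2]
    by_cases e11 : w.1.1 = v.1.1 <;> by_cases e12 : w.1.2 = v.1.2 <;>
      by_cases e21 : w.2.1 = v.2.1 <;> by_cases e22 : w.2.2 = v.2.2 <;>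
      simp [Prod.ext_iff, e11, e12, e21, e22] <;> push_cast <;> ring
  · apply posSemidef_half
    have hid : (rhoTens (ρ1 ⊗ₖ ρ2) - ptBC (regroup R1 R2))
        + (rhoTens (ρ1 ⊗ₖ ρ2) - ptBC (regroup R1 R2))
        = regroup (rhoTens ρ1 - ptBC R1) (rhoTens ρ2 + ptBC R2)
        + regroup (rhoTens ρ1 + ptBC R1) (rhoTens ρ2 - ptBC R2) := by
      rw [rhoTens_kron, ptBC_regroup]
      ext p q
      simp only [Matrix.add_apply, Matrix.sub_apply, regroup, Matrix.of_apply]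
      ring
    rw [hid]
    exact (regroup_posSemidef hY1 hZ2).add (regroup_posSemidef hZ1 hY2)
  · apply posSemidef_half
    have hid : (rhoTens (ρ1 ⊗ₖ ρ2) + ptBC (regroup R1 R2))
        + (rhoTens (ρ1 ⊗ₖ ρ2) + ptBC (regroup R1 R2))
        = regroup (rhoTens ρ1 - ptBC R1) (rhoTens ρ2 - ptBC R2)
        + regroup (rhoTens ρ1 + ptBC R1) (rhoTens ρ2 + ptBC R2) := by
      rw [rhoTens_kron, ptBC_regroup]
      ext p q
      simp only [Matrix.add_apply, Matrix.sub_apply, regroup, Matrix.of_apply]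
      ring
    rw [hid]
    exact (regroup_posSemidef hY1 hY2).add (regroup_posSemidef hZ1 hZ2)

end Tensor

section SetLemmas

lemma trace_rhoTens (ρ : Matrix A' A' ℂ) :
    (rhoTens ρ : Matrix (A' × B × C) (A' × B × C) ℂ).trace
      = (Fintype.card (B × C) : ℂ) * ρ.trace := by
  simp only [Matrix.trace, Matrix.diag, rhoTens, Matrix.of_apply, if_pos rfl, mul_one]
  rw [Fintype.sum_prod_type]
  simp [Finset.sum_const, Finset.mul_sum, mul_comm]

lemma feas_entry_bound {N R : Matrix (A' × B × C) (A' × B × C) ℂ} {ρ : Matrix A' A' ℂ} {m : ℝ}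
    (h : PrimalFeasible N R ρ m) (a b : A' × B × C) :
    ‖R a b‖ ≤ (Fintype.card (B × C) : ℝ) := by
  obtain ⟨hR, hρ, hρtr, hpt, hY, hZ⟩ := h
  set M := (rhoTens ρ : Matrix (A' × B × C) (A' × B × C) ℂ)
  set X := ptBC R
  have hRX : R a b = X (a.1, b.2) (b.1, a.2) := rfl
  have hYZ : X (a.1, b.2) (b.1, a.2) =
      ((M + X) (a.1, b.2) (b.1, a.2) - (M - X) (a.1, b.2) (b.1, a.2)) / 2 := by
    simp only [Matrix.add_apply, Matrix.sub_apply]; ring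
  have hbY := psd_entry_le_trace hY (a.1, b.2) (b.1, a.2)
  have hbZ := psd_entry_le_trace hZ (a.1, b.2) (b.1, a.2)
  have htr : (M - X).trace + (M + X).trace = 2 * M.trace := by
    rw [Matrix.trace_sub, Matrix.trace_add]; ring
  have hM : M.trace = (Fintype.card (B × C) : ℂ) := by
    rw [trace_rhoTens, hρtr, mul_one]
  have htr' : (M - X).trace.re + (M + X).trace.re = 2 * (Fintype.card (B × C) : ℝ) := by
    have := congrArg Complex.re htr
    rw [hM] at this
    simpa using this
  rw [hRX, hYZ]
  rw [norm_div]
  have : ‖(M + X) (a.1, b.2) (b.1, a.2) - (M - X) (a.1, b.2) (b.1, a.2)‖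
      ≤ (M + X).trace.re + (M - X).trace.re := by
    calc _ ≤ ‖(M + X) (a.1, b.2) (b.1, a.2)‖ +
        ‖(M - X) (a.1, b.2) (b.1, a.2)‖ := by
          exact norm_sub_le _ _
      _ ≤ _ := add_le_add hbZ hbY
  have h2 : ‖(2:ℂ)‖ = 2 := by norm_num
  rw [h2]
  linarith

lemma gammaSet_bddAbove (N : Matrix (A' × B × C) (A' × B × C) ℂ) :
    BddAbove {x : ℝ | ∃ (R : Matrix (A' × B × C) (A' × B × C) ℂ)
      (ρ : Matrix A' A' ℂ) (m : ℝ),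
      PrimalFeasible N R ρ m ∧ Matrix.trace (R * N.transpose) = (x : ℂ)} := by
  refine ⟨(Fintype.card (B × C) : ℝ) * ∑ a : A' × B × C, ∑ b : A' × B × C,
    ‖N a b‖, ?_⟩
  rintro x ⟨R, ρ, m, hfeas, htr⟩
  have h1 : x ≤ ‖(x : ℂ)‖ := by
    rw [Complex.norm_real, Real.norm_eq_abs]; exact le_abs_self x
  have h2 : Matrix.trace (R * N.transpose) = ∑ a : A' × B × C, ∑ b : A' × B × C,
      R a b * N a b := trace_mul_eq_sum R N
  rw [← htr, h2] at h1
  refine h1.trans ?_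
  calc ‖∑ a : A' × B × C, ∑ b : A' × B × C, R a b * N a b‖
      ≤ ∑ a : A' × B × C, ∑ b : A' × B × C, ‖R a b * N a b‖ := by
        refine (norm_sum_le _ _).trans ?_
        exact Finset.sum_le_sum fun a _ => norm_sum_le _ _
    _ ≤ ∑ a : A' × B × C, ∑ b : A' × B × C,
        (Fintype.card (B × C) : ℝ) * ‖N a b‖ := by
        refine Finset.sum_le_sum fun a _ => Finset.sum_le_sum fun b _ => ?_
        rw [norm_mul]
        exact mul_le_mul_of_nonneg_right (feas_entry_bound hfeas a b)
          (norm_nonneg _)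
    _ = _ := by rw [Finset.mul_sum]; exact Finset.sum_congr rfl fun a _ => (Finset.mul_sum _ _ _).symm

lemma gammaSet_empty (h : IsEmpty A') (N : Matrix (A' × B × C) (A' × B × C) ℂ) :
    {x : ℝ | ∃ (R : Matrix (A' × B × C) (A' × B × C) ℂ)
      (ρ : Matrix A' A' ℂ) (m : ℝ),
      PrimalFeasible N R ρ m ∧ Matrix.trace (R * N.transpose) = (x : ℂ)} = ∅ := by
  ext x
  simp only [Set.mem_setOf_eq, Set.mem_empty_iff_false, iff_false]
  rintro ⟨R, ρ, m, ⟨_, _, hρtr, _⟩, _⟩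
  have : ρ.trace = 0 := by
    simp [Matrix.trace, Finset.univ_eq_empty]
  rw [this] at hρtr
  exact zero_ne_one hρtr

lemma gammaSet_zero_mem (h : Nonempty A') (N : Matrix (A' × B × C) (A' × B × C) ℂ) :
    (0:ℝ) ∈ {x : ℝ | ∃ (R : Matrix (A' × B × C) (A' × B × C) ℂ)
      (ρ : Matrix A' A' ℂ) (m : ℝ),
      PrimalFeasible N R ρ m ∧ Matrix.trace (R * N.transpose) = (x : ℂ)} := by
  have hcard : (Fintype.card A' : ℂ) ≠ 0 := by
    exact_mod_cast Nat.cast_ne_zero.mpr Fintype.card_ne_zero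
  set c : ℂ := ((Fintype.card A' : ℂ))⁻¹ with hc
  have hc0 : 0 ≤ c := by
    have h1 : c = Complex.ofReal ((Fintype.card A' : ℝ)⁻¹) := by
      rw [hc, Complex.ofReal_inv, Complex.ofReal_natCast]
    rw [h1, Complex.zero_le_real]
    positivity
  have hdiag : (rhoTens (Matrix.diagonal (fun _ => c)) : Matrix (A' × B × C) (A' × B × C) ℂ)
      = Matrix.diagonal (fun _ => c) := by
    ext p q
    rcases p with ⟨a, w⟩; rcases q with ⟨b, v⟩
    simp only [rhoTens, Matrix.of_apply, Matrix.diagonal_apply, Prod.mk.injEq]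
    by_cases hab : a = b <;> by_cases hwv : w = v <;> simp [hab, hwv]
  refine ⟨0, Matrix.diagonal (fun _ => c), 0, ⟨Matrix.PosSemidef.zero, ?_, ?_, ?_, ?_, ?_⟩, by simp⟩
  · exact Matrix.PosSemidef.diagonal (fun _ => hc0)
  · simp [Matrix.trace_diagonal, Finset.sum_const, hc]
  · intro w v; simp
  · have hpt0 : ptBC (0 : Matrix (A' × B × C) (A' × B × C) ℂ) = 0 := rfl
    rw [hpt0, sub_zero, hdiag]
    exact Matrix.PosSemidef.diagonal (fun _ => hc0)
  · have hpt0 : ptBC (0 : Matrix (A' × B × C) (A' × B × C) ℂ) = 0 := rfl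
    rw [hpt0, add_zero, hdiag]
    exact Matrix.PosSemidef.diagonal (fun _ => hc0)

lemma sup_mul_le {S1 S2 : Set ℝ} {K : ℝ}
    (h1 : S1.Nonempty) (h2 : S2.Nonempty) (hK : 0 ≤ K)
    (ha : 0 ≤ sSup S1) (hb : 0 ≤ sSup S2)
    (h : ∀ x ∈ S1, ∀ y ∈ S2, x * y ≤ K) :
    sSup S1 * sSup S2 ≤ K := by
  by_contra hlt
  push_neg at hlt
  have ha' : 0 < sSup S1 := by
    rcases eq_or_lt_of_le ha with h0 | h0
    · rw [← h0, zero_mul] at hlt; linarith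
    · exact h0
  have hb' : 0 < sSup S2 := by
    rcases eq_or_lt_of_le hb with h0 | h0
    · rw [← h0, mul_zero] at hlt; linarith
    · exact h0
  have hx : K / sSup S2 < sSup S1 := by
    rw [div_lt_iff₀ hb']; linarith
  obtain ⟨x, hxS, hxgt⟩ := exists_lt_of_lt_csSup h1 hx
  have hxpos : 0 < x := lt_of_le_of_lt (div_nonneg hK hb'.le) hxgt
  have hy : K / x < sSup S2 := by
    rw [div_lt_iff₀ hxpos]
    rw [div_lt_iff₀ hb'] at hxgt
    nlinarith
  obtain ⟨y, hyS, hygt⟩ := exists_lt_of_lt_csSup h2 hy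
  have : K < x * y := by
    rw [div_lt_iff₀ hxpos] at hygt; nlinarith
  exact absurd (h x hxS y hyS) (not_le.mpr this)

end SetLemmas

/-- Supermultiplicativity of `Γ`. -/
theorem Gamma_supermultiplicative
    {A1 B1 C1 A2 B2 C2 : Type*}
    [Fintype A1] [Fintype B1] [Fintype C1] [Fintype A2] [Fintype B2] [Fintype C2]
    [DecidableEq A1] [DecidableEq B1] [DecidableEq C1]
    [DecidableEq A2] [DecidableEq B2] [DecidableEq C2]
    (N1 : Matrix (A1 × B1 × C1) (A1 × B1 × C1) ℂ)
    (N2 : Matrix (A2 × B2 × C2) (A2 × B2 × C2) ℂ)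
    (hN1 : N1.PosSemidef) (hN2 : N2.PosSemidef)
    (R1 : Matrix (A1 × B1 × C1) (A1 × B1 × C1) ℂ) (ρ1 : Matrix A1 A1 ℂ) (m1 : ℝ)
    (R2 : Matrix (A2 × B2 × C2) (A2 × B2 × C2) ℂ) (ρ2 : Matrix A2 A2 ℂ) (m2 : ℝ)
    (h1 : PrimalFeasible N1 R1 ρ1 m1) (h2 : PrimalFeasible N2 R2 ρ2 m2) :
    PrimalFeasible (regroup N1 N2) (regroup R1 R2) (ρ1 ⊗ₖ ρ2) (m1 * m2) ∧
    Matrix.trace (regroup R1 R2 * (regroup N1 N2).transpose) =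
      Matrix.trace (R1 * N1.transpose) * Matrix.trace (R2 * N2.transpose) ∧
    Gamma N1 * Gamma N2 ≤ Gamma (regroup N1 N2) := by
  refine ⟨tensor_feasible h1 h2, trace_regroup_mul R1 N1 R2 N2, ?_⟩
  by_cases hA1 : Nonempty A1
  · by_cases hA2 : Nonempty A2
    · -- main case
      have hprod : ∀ x ∈ {x : ℝ | ∃ R ρ m, PrimalFeasible N1 R ρ m ∧
            Matrix.trace (R * N1.transpose) = (x : ℂ)},
          ∀ y ∈ {x : ℝ | ∃ R ρ m, PrimalFeasible N2 R ρ m ∧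
            Matrix.trace (R * N2.transpose) = (x : ℂ)},
          x * y ≤ Gamma (regroup N1 N2) := by
        rintro x ⟨S1, σ1, k1, hf1, ht1⟩ y ⟨S2, σ2, k2, hf2, ht2⟩
        have hmem : x * y ∈ {x : ℝ | ∃ R ρ m, PrimalFeasible (regroup N1 N2) R ρ m ∧
            Matrix.trace (R * (regroup N1 N2).transpose) = (x : ℂ)} := by
          refine ⟨regroup S1 S2, σ1 ⊗ₖ σ2, k1 * k2, tensor_feasible hf1 hf2, ?_⟩
          rw [trace_regroup_mul S1 N1 S2 N2, ht1, ht2]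
          push_cast
          ring
        exact le_csSup (gammaSet_bddAbove (regroup N1 N2)) hmem
      have h01 := gammaSet_zero_mem hA1 N1
      have h02 := gammaSet_zero_mem hA2 N2
      have hA12 : Nonempty (A1 × A2) := hA1.elim fun a1 => hA2.elim fun a2 => ⟨(a1, a2)⟩
      have h03 := gammaSet_zero_mem hA12 (regroup N1 N2)
      refine sup_mul_le ⟨0, h01⟩ ⟨0, h02⟩
        (le_csSup (gammaSet_bddAbove (regroup N1 N2)) h03)
        (le_csSup (gammaSet_bddAbove N1) h01)
        (le_csSup (gammaSet_bddAbove N2) h02)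
        hprod
    · rw [not_nonempty_iff] at hA2
      have e2 : Gamma N2 = 0 := by
        unfold Gamma
        rw [gammaSet_empty hA2 N2, Real.sSup_empty]
      have e3 : Gamma (regroup N1 N2) = 0 := by
        unfold Gamma
        haveI := hA2
        have : IsEmpty (A1 × A2) := inferInstance
        rw [gammaSet_empty this (regroup N1 N2), Real.sSup_empty]
      rw [e2, e3, mul_zero]
  · rw [not_nonempty_iff] at hA1
    have e1 : Gamma N1 = 0 := by
      unfold Gamma
      rw [gammaSet_empty hA1 N1, Real.sSup_empty]
    have e3 : Gamma (regroup N1 N2) = 0 := by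
      unfold Gamma
      haveI := hA1
      have : IsEmpty (A1 × A2) := inferInstance
      rw [gammaSet_empty this (regroup N1 N2), Real.sSup_empty]
    rw [e1, e3, zero_mul]
end

section
/- Let A1, B1 be Hermitian matrices on a finite-dimensional space H1 and A2, B2 Hermitian matrices on a finite-dimensional space H2. If −A1 ≤ B1 ≤ A1 and −A2 ≤ B2 ≤ A2, then −A1⊗A2 ≤ B1⊗B2 ≤ A1⊗A2. -/
open Matrix
open scoped ComplexOrder Kronecker

lemma conjTranspose_kronecker' {m n : Type*} (A : Matrix m m ℂ) (B : Matrix n n ℂ) :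
    (A ⊗ₖ B)ᴴ = Aᴴ ⊗ₖ Bᴴ := by
  ext ⟨i, j⟩ ⟨k, l⟩
  simp [conjTranspose_apply, kroneckerMap_apply, star_mul']

lemma posSemidef_kronecker' {m n : Type*} [Fintype m] [Fintype n]
    {A : Matrix m m ℂ} {B : Matrix n n ℂ}
    (hA : A.PosSemidef) (hB : B.PosSemidef) : (A ⊗ₖ B).PosSemidef := by
  classical
  exact hA.kronecker hB

lemma half_psd {m : Type*} [Fintype m] {X : Matrix m m ℂ}
    (hX : X.IsHermitian) (h : (X + X).PosSemidef) : X.PosSemidef := by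
  refine Matrix.PosSemidef.of_dotProduct_mulVec_nonneg hX (fun x => ?_)
  have h2 := h.dotProduct_mulVec_nonneg x
  rw [add_mulVec, dotProduct_add] at h2
  have key : ((2:ℝ)⁻¹ : ℝ) • (star x ⬝ᵥ X.mulVec x + star x ⬝ᵥ X.mulVec x)
      = star x ⬝ᵥ X.mulVec x := by
    rw [RCLike.real_smul_eq_coe_mul]; push_cast; ring
  rw [← key]
  exact smul_nonneg (by norm_num) h2

/-- If `−A1 ≤ B1 ≤ A1` and `−A2 ≤ B2 ≤ A2` for Hermitian matrices, then
`−A1⊗A2 ≤ B1⊗B2 ≤ A1⊗A2`. -/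
theorem kronecker_abs_le {H1 H2 : Type*} [Fintype H1] [Fintype H2]
    (A1 B1 : Matrix H1 H1 ℂ) (A2 B2 : Matrix H2 H2 ℂ)
    (hA1 : A1.IsHermitian) (hB1 : B1.IsHermitian)
    (hA2 : A2.IsHermitian) (hB2 : B2.IsHermitian)
    (h1l : (B1 + A1).PosSemidef) (h1u : (A1 - B1).PosSemidef)
    (h2l : (B2 + A2).PosSemidef) (h2u : (A2 - B2).PosSemidef) :
    (B1 ⊗ₖ B2 + A1 ⊗ₖ A2).PosSemidef ∧ (A1 ⊗ₖ A2 - B1 ⊗ₖ B2).PosSemidef := by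
  have hH : (A1 ⊗ₖ A2).IsHermitian := by
    rw [Matrix.IsHermitian, conjTranspose_kronecker', hA1.eq, hA2.eq]
  have hHB : (B1 ⊗ₖ B2).IsHermitian := by
    rw [Matrix.IsHermitian, conjTranspose_kronecker', hB1.eq, hB2.eq]
  have P1 := posSemidef_kronecker' h1l h2l
  have P2 := posSemidef_kronecker' h1u h2u
  have P3 := posSemidef_kronecker' h1l h2u
  have P4 := posSemidef_kronecker' h1u h2l
  have e1 : (B1 + A1) ⊗ₖ (B2 + A2) + (A1 - B1) ⊗ₖ (A2 - B2)
      = (B1 ⊗ₖ B2 + A1 ⊗ₖ A2) + (B1 ⊗ₖ B2 + A1 ⊗ₖ A2) := by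
    ext ⟨i, j⟩ ⟨k, l⟩
    simp only [Matrix.add_apply, Matrix.sub_apply, kroneckerMap_apply]
    ring
  have e2 : (B1 + A1) ⊗ₖ (A2 - B2) + (A1 - B1) ⊗ₖ (B2 + A2)
      = (A1 ⊗ₖ A2 - B1 ⊗ₖ B2) + (A1 ⊗ₖ A2 - B1 ⊗ₖ B2) := by
    ext ⟨i, j⟩ ⟨k, l⟩
    simp only [Matrix.add_apply, Matrix.sub_apply, kroneckerMap_apply]
    ring
  constructor
  · exact half_psd (hHB.add hH) (e1 ▸ (P1.add P2))
  · exact half_psd (hH.sub hHB) (e2 ▸ (P3.add P4))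
end
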